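/- arXiv:1207.1536 — 12 statements merged into one kernel-verified Lean document; each statement's English description precedes it below -/
import Mathlib

section
/- Let X be a metric space and f : X → X a continuous map. If f is topologically transitive, then f is strongly indecomposable; that is, for every sequence (A_n)_{n≥1} of f-invariant closed subsets of X each having nonempty interior, the intersection ⋂_{n≥1} A_n has nonempty interior. -/
/-!
An invariant set `s` contains every iterate of its interior, and transitivity sends some iterate
of that interior into any nonempty open set; so `s` is dense, and a closed invariant set with
nonempty interior is the whole space. The intersection is then the whole space as well.
-/

/-- A self-map of a topological space is topologically transitive if for any two
nonempty open sets `U, V` some iterate image of `U` meets `V`. -/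
def TopTransitive {Y : Type*} [TopologicalSpace Y] (g : Y → Y) : Prop :=
  ∀ U V : Set Y, IsOpen U → IsOpen V → U.Nonempty → V.Nonempty →
    ∃ n : ℕ, (g^[n] '' U ∩ V).Nonempty

/-- A self-map is strongly indecomposable if for every sequence of invariant closed
sets with nonempty interior, the intersection has nonempty interior. -/
def StronglyIndecomposable {Y : Type*} [TopologicalSpace Y] (g : Y → Y) : Prop :=
  ∀ A : ℕ → Set Y, (∀ n, IsClosed (A n)) → (∀ n, g '' A n ⊆ A n) →
    (∀ n, (interior (A n)).Nonempty) → (interior (⋂ n, A n)).Nonempty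

namespace TopTransitive

variable {Y : Type*} [TopologicalSpace Y] {g : Y → Y} {s : Set Y}

theorem dense_of_image_subset (hg : TopTransitive g) (hs : g '' s ⊆ s)
    (hint : (interior s).Nonempty) : Dense s := by
  rw [dense_iff_inter_open]
  intro V hV hVne
  obtain ⟨n, x, hxs, hxV⟩ := hg (interior s) V isOpen_interior hV hint hVne
  have hmaps : Set.MapsTo g^[n] s s := (Set.mapsTo_iff_image_subset.2 hs).iterate n
  exact ⟨x, hxV, hmaps.image_subset (Set.image_mono interior_subset hxs)⟩

theorem eq_univ_of_isClosed (hg : TopTransitive g) (hclosed : IsClosed s) (hs : g '' s ⊆ s)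
    (hint : (interior s).Nonempty) : s = Set.univ :=
  hclosed.closure_eq.symm.trans (hg.dense_of_image_subset hs hint).closure_eq

end TopTransitive

theorem transitive_implies_stronglyIndecomposable_general {X : Type*} [MetricSpace X]
    (f : X → X) (htrans : TopTransitive f) :
    StronglyIndecomposable f := by
  intro A hclosed hinv hint
  have hA : ⋂ n, A n = Set.univ :=
    Set.iInter_eq_univ.2 fun n => htrans.eq_univ_of_isClosed (hclosed n) (hinv n) (hint n)
  rw [hA, interior_univ]
  exact (hint 0).mono (Set.subset_univ _)

theorem transitive_implies_stronglyIndecomposable {X : Type*} [MetricSpace X]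
    (f : X → X) (hf : Continuous f) (htrans : TopTransitive f) :
    StronglyIndecomposable f :=
  transitive_implies_stronglyIndecomposable_general f htrans
end

section
/- Let X be a metric space and f : X → X a continuous map such that the set R(f) of recurrent points of f is dense in X. If f is indecomposable, then f is topologically transitive. -/
/-!
If `f` is not transitive, there are nonempty open `U, V` such that `U` never reaches `V`. Then
`U` lies in the closed invariant set `Gᶜ`, where `G = ⋃ n, f^[n] ⁻¹' V`, and `V` lies in
`closure G`. The latter is invariant too: a recurrent point of the open set `G` returns to `G`
and so already has its image in `G`, and recurrent points are dense. Indecomposability would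
then give `Gᶜ ∩ closure G = frontier G` nonempty interior, which a frontier never has.
-/

open Set Filter Topology

/-- A self-map is indecomposable if for any two invariant closed sets with nonempty
interior, their intersection has nonempty interior. -/
def Indecomposable {Y : Type*} [TopologicalSpace Y] (g : Y → Y) : Prop :=
  ∀ A B : Set Y, IsClosed A → IsClosed B → g '' A ⊆ A → g '' B ⊆ B →
    (interior A).Nonempty → (interior B).Nonempty → (interior (A ∩ B)).Nonempty

/-- A point `x` is recurrent for `g` if some subsequence of its orbit along a strictly
increasing sequence of positive integers converges back to `x`. -/
def RecurrentPt {Y : Type*} [TopologicalSpace Y] (g : Y → Y) (x : Y) : Prop :=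
  ∃ n : ℕ → ℕ, StrictMono n ∧ (∀ k, 1 ≤ n k) ∧
    Filter.Tendsto (fun k => g^[n k] x) Filter.atTop (nhds x)

theorem image_compl_iUnion_preimage_iterate_subset {X : Type*} (f : X → X) (V : Set X) :
    f '' (⋃ n, f^[n] ⁻¹' V)ᶜ ⊆ (⋃ n, f^[n] ⁻¹' V)ᶜ := by
  rintro _ ⟨x, hx, rfl⟩ hfx
  obtain ⟨n, hn⟩ := mem_iUnion.1 hfx
  exact hx (mem_iUnion.2 ⟨n + 1, by rwa [mem_preimage, Function.iterate_succ_apply]⟩)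

section

variable {X : Type*} [TopologicalSpace X] {f : X → X}

theorem isOpen_iUnion_preimage_iterate (hf : Continuous f) {V : Set X} (hV : IsOpen V) :
    IsOpen (⋃ n, f^[n] ⁻¹' V) :=
  isOpen_iUnion fun n => hV.preimage (hf.iterate n)

theorem RecurrentPt.exists_iterate_succ_mem {x : X} (hx : RecurrentPt f x) {s : Set X}
    (hs : s ∈ 𝓝 x) : ∃ k, f^[k + 1] x ∈ s := by
  obtain ⟨n, -, hn_pos, hn_tendsto⟩ := hx
  obtain ⟨k, hk⟩ := (hn_tendsto.eventually hs).exists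
  exact ⟨n k - 1, by rwa [Nat.sub_add_cancel (hn_pos k)]⟩

theorem RecurrentPt.apply_mem_iUnion_preimage_iterate (hf : Continuous f) {V : Set X}
    (hV : IsOpen V) {x : X} (hx : RecurrentPt f x) (hxV : x ∈ ⋃ n, f^[n] ⁻¹' V) :
    f x ∈ ⋃ n, f^[n] ⁻¹' V := by
  obtain ⟨k, hk⟩ :=
    hx.exists_iterate_succ_mem ((isOpen_iUnion_preimage_iterate hf hV).mem_nhds hxV)
  obtain ⟨m, hm⟩ := mem_iUnion.1 hk
  refine mem_iUnion.2 ⟨m + k, ?_⟩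
  rwa [mem_preimage, Function.iterate_add_apply, ← Function.iterate_succ_apply]

theorem image_closure_subset_closure_of_dense (hf : Continuous f) {D s : Set X}
    (hD : Dense D) (hs : IsOpen s) (h : f '' (s ∩ D) ⊆ s) : f '' closure s ⊆ closure s :=
  calc f '' closure s ⊆ f '' closure (s ∩ D) := image_mono <|
      closure_minimal (hD.open_subset_closure_inter hs) isClosed_closure
    _ ⊆ closure (f '' (s ∩ D)) := image_closure_subset_closure_image hf
    _ ⊆ closure s := closure_mono h

theorem image_closure_iUnion_preimage_iterate_subset (hf : Continuous f)
    (hrec : Dense {x | RecurrentPt f x}) {V : Set X} (hV : IsOpen V) :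
    f '' closure (⋃ n, f^[n] ⁻¹' V) ⊆ closure (⋃ n, f^[n] ⁻¹' V) := by
  refine image_closure_subset_closure_of_dense hf hrec
    (isOpen_iUnion_preimage_iterate hf hV) ?_
  rintro _ ⟨x, ⟨hxV, hx⟩, rfl⟩
  exact hx.apply_mem_iUnion_preimage_iterate hf hV hxV

end

theorem indecomposable_implies_transitive_of_denseRecurrent {X : Type*} [MetricSpace X]
    (f : X → X) (hf : Continuous f) (hrec : Dense {x : X | RecurrentPt f x})
    (hind : Indecomposable f) : TopTransitive f := by
  intro U V hU hV ⟨u, hu⟩ ⟨v, hv⟩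
  by_contra! hUV
  set G := ⋃ n, f^[n] ⁻¹' V
  have hG : IsOpen G := isOpen_iUnion_preimage_iterate hf hV
  have hUG : U ⊆ Gᶜ := fun x hx hxG => by
    obtain ⟨n, hn⟩ := mem_iUnion.1 hxG
    exact (hUV n).subset ⟨mem_image_of_mem _ hx, hn⟩
  have hVG : V ⊆ closure G := fun x hx => subset_closure (mem_iUnion.2 ⟨0, hx⟩)
  obtain ⟨x, hx⟩ := hind _ _ hG.isClosed_compl isClosed_closure
    (image_compl_iUnion_preimage_iterate_subset f V)
    (image_closure_iUnion_preimage_iterate_subset hf hrec hV)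
    ⟨u, interior_maximal hUG hU hu⟩ ⟨v, interior_maximal hVG hV hv⟩
  rw [inter_comm, ← sdiff_eq, ← hG.frontier_eq, ← frontier_compl,
    interior_frontier hG.isClosed_compl] at hx
  exact hx
end

section
/- Let X be a metric space and f : X → X a continuous map such that the set R(f) of recurrent points of f is dense in X. Then the following conditions are equivalent: (1) f is topologically transitive; (2) f is strongly indecomposable; (3) f is indecomposable. -/
/-! Transitivity forces every closed invariant set with nonempty interior to be the whole
space, which gives strong indecomposability. Conversely, if the orbit of an open set `U`
never meets an open set `V`, the orbit closures of `U` and `V` are closed invariant sets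
with nonempty interior, and indecomposability yields an open set `W` inside both. Some
iterate of `V` enters `W`, so a recurrent point `z ∈ V` has an iterate in the orbit
closure of `U`; being recurrent, `z` itself lies in that closed invariant set, which is
disjoint from `V`. -/

section

open Set Filter Function

variable {Y : Type*} [TopologicalSpace Y] {g : Y → Y}

def orbitClosure (g : Y → Y) (U : Set Y) : Set Y :=
  closure (⋃ n, g^[n] '' U)

lemma subset_orbitClosure (U : Set Y) : U ⊆ orbitClosure g U :=
  fun x hx => subset_closure (mem_iUnion.2 ⟨0, x, hx, rfl⟩)

lemma mapsTo_orbitClosure (hg : Continuous g) (U : Set Y) :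
    MapsTo g (orbitClosure g U) (orbitClosure g U) := by
  refine MapsTo.closure (fun x hx => ?_) hg
  obtain ⟨n, y, hy, rfl⟩ := mem_iUnion.1 hx
  exact mem_iUnion.2 ⟨n + 1, y, hy, iterate_succ_apply' g n y⟩

lemma disjoint_orbitClosure_of_iterate_image_inter_eq_empty {U V : Set Y} (hV : IsOpen V)
    (h : ∀ n, g^[n] '' U ∩ V = ∅) : Disjoint (orbitClosure g U) V :=
  (disjoint_iUnion_left.2 fun n => disjoint_iff_inter_eq_empty.2 (h n)).closure_left hV

lemma RecurrentPt.mem_of_iterate_mem {A : Set Y} {x : Y} (hx : RecurrentPt g x)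
    (hA : IsClosed A) (hAg : MapsTo g A A) {m : ℕ} (hm : g^[m] x ∈ A) : x ∈ A := by
  obtain ⟨n, hn, -, hlim⟩ := hx
  refine hA.mem_of_tendsto hlim ((eventually_ge_atTop m).mono fun k hk => ?_)
  have hmk : m ≤ n k := hk.trans hn.le_apply
  rw [← Nat.sub_add_cancel hmk, iterate_add_apply]
  exact hAg.iterate _ hm

lemma inter_nonempty_of_iterate_image_inter_interior (hg : Continuous g)
    (hrec : Dense {x | RecurrentPt g x}) {A V : Set Y} (hA : IsClosed A)
    (hAg : MapsTo g A A) (hV : IsOpen V) {m : ℕ} (hm : (g^[m] '' V ∩ interior A).Nonempty) :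
    (V ∩ A).Nonempty := by
  obtain ⟨_, ⟨v, hv, rfl⟩, hvA⟩ := hm
  obtain ⟨z, hz, hzV, hzA⟩ := hrec.exists_mem_open
    (hV.inter (isOpen_interior.preimage (hg.iterate m))) ⟨v, hv, hvA⟩
  exact ⟨z, hzV, hz.mem_of_iterate_mem hA hAg (interior_subset hzA)⟩

lemma TopTransitive.eq_univ_of_isClosed_s3 (hT : TopTransitive g) {A : Set Y} (hA : IsClosed A)
    (hAg : MapsTo g A A) (hint : (interior A).Nonempty) : A = univ := by
  refine hA.closure_eq.symm.trans (Dense.closure_eq (dense_iff_inter_open.2 fun V hV hVne => ?_))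
  obtain ⟨m, _, ⟨x, hx, rfl⟩, hV⟩ := hT _ V isOpen_interior hV hint hVne
  exact ⟨_, hV, hAg.iterate m (interior_subset hx)⟩

lemma TopTransitive.stronglyIndecomposable (hT : TopTransitive g) :
    StronglyIndecomposable g := by
  intro A hA hAg hint
  have hA_univ (n : ℕ) : A n = univ :=
    hT.eq_univ_of_isClosed_s3 (hA n) (mapsTo_iff_image_subset.2 (hAg n)) (hint n)
  obtain ⟨x, -⟩ := hint 0
  simp only [hA_univ, iInter_const, interior_univ]
  exact ⟨x, mem_univ x⟩

lemma StronglyIndecomposable.indecomposable (hS : StronglyIndecomposable g) :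
    Indecomposable g := by
  intro A B hA hB hAg hBg hAint hBint
  let C : ℕ → Set Y := fun n => if n = 0 then A else B
  have hC {P : Set Y → Prop} (hPA : P A) (hPB : P B) (n : ℕ) : P (C n) := by
    by_cases hn : n = 0 <;> simp [C, hn, hPA, hPB]
  have hCint := hS C (hC hA hB) (hC (P := fun S => g '' S ⊆ S) hAg hBg)
    (hC (P := fun S => (interior S).Nonempty) hAint hBint)
  exact hCint.mono (interior_mono (subset_inter (iInter_subset C 0) (iInter_subset C 1)))

lemma Indecomposable.topTransitive (hI : Indecomposable g) (hg : Continuous g)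
    (hrec : Dense {x | RecurrentPt g x}) : TopTransitive g := by
  intro U V hU hV hUne hVne
  by_contra! hUV
  have hUinv := mapsTo_orbitClosure hg U
  obtain ⟨w, hw⟩ := hI _ _ isClosed_closure isClosed_closure hUinv.image_subset
    (mapsTo_orbitClosure hg V).image_subset
    (hUne.mono (interior_maximal (subset_orbitClosure U) hU))
    (hVne.mono (interior_maximal (subset_orbitClosure V) hV))
  obtain ⟨_, hyW, hyV⟩ := mem_closure_iff.1 (interior_subset hw).2 _ isOpen_interior hw
  obtain ⟨m, hm⟩ := mem_iUnion.1 hyV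
  have hmeet : (g^[m] '' V ∩ interior (orbitClosure g U)).Nonempty :=
    ⟨_, hm, interior_mono inter_subset_left hyW⟩
  obtain ⟨z, hzV, hzA⟩ :=
    inter_nonempty_of_iterate_image_inter_interior hg hrec isClosed_closure hUinv hV hmeet
  exact (disjoint_orbitClosure_of_iterate_image_inter_eq_empty hV hUV).ne_of_mem hzA hzV rfl

end

theorem transitive_iff_stronglyIndecomposable_iff_indecomposable {X : Type*}
    [MetricSpace X] (f : X → X) (hf : Continuous f)
    (hrec : Dense {x : X | RecurrentPt f x}) :
    (TopTransitive f ↔ StronglyIndecomposable f) ∧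
      (StronglyIndecomposable f ↔ Indecomposable f) := by
  have hIT : Indecomposable f → TopTransitive f := fun hI => hI.topTransitive hf hrec
  exact ⟨⟨TopTransitive.stronglyIndecomposable, fun hS => hIT hS.indecomposable⟩,
    ⟨StronglyIndecomposable.indecomposable, fun hI => (hIT hI).stronglyIndecomposable⟩⟩
end

section
/- Let X be a nonempty separable metric space which is a Baire space, and let f : X → X be a continuous map. If f is topologically transitive, then f is weakly indecomposable; that is, there exists a residual subset S ⊆ X such that ω(x) = ω(y) ≠ ∅ for all x, y ∈ S. -/
/-- The ω-limit set of a point: `ω(x) = ⋂ₙ closure {gᵏ(x) : k ≥ n}`. -/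
def omegaSet {Y : Type*} [TopologicalSpace Y] (g : Y → Y) (x : Y) : Set Y :=
  ⋂ n : ℕ, closure {y | ∃ k, n ≤ k ∧ g^[k] x = y}

/-- A set is residual if it contains a dense Gδ set. -/
def ResidualSet {Y : Type*} [TopologicalSpace Y] (S : Set Y) : Prop :=
  ∃ G : Set Y, G ⊆ S ∧ IsGδ G ∧ Dense G

/-- A self-map is weakly indecomposable if there is a residual set on which all points
have the same nonempty ω-limit set. -/
def WeaklyIndecomposable {Y : Type*} [TopologicalSpace Y] (g : Y → Y) : Prop :=
  ∃ S : Set Y, ResidualSet S ∧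
    (∀ x ∈ S, ∀ y ∈ S, omegaSet g x = omegaSet g y) ∧
    (∀ x ∈ S, (omegaSet g x).Nonempty)

/-!
Transitivity makes `⋃ₙ f⁻ⁿ(V)` open and dense for every nonempty open `V`, so in a second
countable Baire space the points with dense forward orbit form a dense Gδ set. A transitive map of
a Hausdorff space has dense range (two disjoint open sets can only be joined through an iterate
`n ≥ 1`), so `f` maps a dense orbit onto a dense orbit; hence every tail of a dense orbit is dense
and `ω(x) = X` for all those points.
-/

open Set Function TopologicalSpace

section Iterate

variable {X : Type*}

lemma image_range_iterate (f : X → X) (x : X) : f '' range (f^[·] x) = range (f^[·] (f x)) := by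
  rw [← range_comp]
  congr 1
  funext n
  exact (iterate_succ_apply' f n x).symm.trans (iterate_succ_apply f n x)

lemma setOf_iterate_ge_eq_range (f : X → X) (x : X) (N : ℕ) :
    {y | ∃ k, N ≤ k ∧ f^[k] x = y} = range (f^[·] (f^[N] x)) := by
  ext y
  constructor
  · rintro ⟨k, hk, rfl⟩
    exact ⟨k - N, by simp only [← iterate_add_apply, Nat.sub_add_cancel hk]⟩
  · rintro ⟨j, rfl⟩
    exact ⟨j + N, Nat.le_add_left N j, iterate_add_apply f j N x⟩

end Iterate

section Dynamics

variable {X : Type*} [TopologicalSpace X] {f : X → X}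

lemma ResidualSet.mono {S T : Set X} (hS : ResidualSet S) (hST : S ⊆ T) : ResidualSet T :=
  let ⟨G, hGS, hG, hGd⟩ := hS
  ⟨G, hGS.trans hST, hG, hGd⟩

lemma TopTransitive.denseRange [T2Space X] (h : TopTransitive f) : DenseRange f := by
  refine dense_iff_inter_open.2 fun V hV ⟨a, ha⟩ => ?_
  by_cases hX : ∃ u, u ≠ a
  · obtain ⟨u, hu⟩ := hX
    obtain ⟨A, B, hA, hB, huA, haB, hAB⟩ := t2_separation hu
    obtain ⟨n, _, ⟨y, hyA, rfl⟩, hyB, hyV⟩ :=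
      h A (B ∩ V) hA (hB.inter hV) ⟨u, huA⟩ ⟨a, haB, ha⟩
    cases n with
    | zero => exact absurd hyB (disjoint_left.1 hAB hyA)
    | succ n => exact ⟨_, hyV, f^[n] y, (iterate_succ_apply' f n y).symm⟩
  · push Not at hX
    exact ⟨a, ha, a, hX (f a)⟩

lemma TopTransitive.residualSet_dense_orbit [SecondCountableTopology X] [BaireSpace X]
    (hf : Continuous f) (h : TopTransitive f) : ResidualSet {x | Dense (range (f^[·] x))} := by
  have hbasis := isBasis_countableBasis X
  have hopen (V : Set X) (hV : IsOpen V) : IsOpen (⋃ n, f^[n] ⁻¹' V) :=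
    isOpen_iUnion fun n => hV.preimage (hf.iterate n)
  let B := {V ∈ countableBasis X | V.Nonempty}
  have hB : B.Countable := (countable_countableBasis X).mono (sep_subset _ _)
  refine ⟨⋂ V ∈ B, ⋃ n, f^[n] ⁻¹' V, fun x hx => ?_, ?_, ?_⟩
  · refine hbasis.dense_iff.2 fun V hV hne => ?_
    obtain ⟨n, hn⟩ := mem_iUnion.1 (mem_iInter₂.1 hx V ⟨hV, hne⟩)
    exact ⟨_, hn, n, rfl⟩
  · exact .biInter hB fun V hV => (hopen V (hbasis.isOpen hV.1)).isGδ
  · refine dense_biInter_of_isOpen (fun V hV => hopen V (hbasis.isOpen hV.1)) hB fun V hV => ?_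
    refine dense_iff_inter_open.2 fun U hU hne => ?_
    obtain ⟨n, _, ⟨y, hy, rfl⟩, hyV⟩ := h U V hU (hbasis.isOpen hV.1) hne hV.2
    exact ⟨y, hy, mem_iUnion.2 ⟨n, hyV⟩⟩

lemma Dense.range_iterate_iterate (hf : Continuous f) (hd : DenseRange f) {x : X}
    (hx : Dense (range (f^[·] x))) (N : ℕ) : Dense (range (f^[·] (f^[N] x))) := by
  induction N with
  | zero => exact hx
  | succ N ih =>
    rw [iterate_succ_apply', ← image_range_iterate]
    exact hd.dense_image hf ih

lemma omegaSet_eq_univ_of_dense_orbit (hf : Continuous f) (hd : DenseRange f) {x : X}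
    (hx : Dense (range (f^[·] x))) : omegaSet f x = univ := by
  simp only [omegaSet, setOf_iterate_ge_eq_range, (hx.range_iterate_iterate hf hd _).closure_eq,
    iInter_univ]

end Dynamics

theorem transitive_implies_weaklyIndecomposable {X : Type*} [MetricSpace X]
    [Nonempty X] [TopologicalSpace.SeparableSpace X] [BaireSpace X]
    (f : X → X) (hf : Continuous f) (htrans : TopTransitive f) :
    WeaklyIndecomposable f := by
  have := UniformSpace.secondCountable_of_separable X
  have hresidual : ResidualSet {x | omegaSet f x = univ} :=
    (htrans.residualSet_dense_orbit hf).mono fun _ hx =>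
      omegaSet_eq_univ_of_dense_orbit hf htrans.denseRange hx
  exact ⟨_, hresidual, fun _ hx _ hy => hx.trans hy.symm, fun _ hx => hx ▸ univ_nonempty⟩
end

section
/- Let X be a separable metric space which is a Baire space, and let f : X → X be a continuous map such that the set R(f) of recurrent points of f is dense in X. If f is weakly indecomposable, then f is topologically transitive. -/
/-! Recurrent points form a Gδ set, so by Baire's theorem the recurrent points of the dense Gδ
set `G` on which `ω` is constant are still dense. A recurrent point `p` lies in `ω(p)`, so for
`u ∈ G` the set `ω(u) = ω(p)` contains all of them and is dense. Hence every point of the dense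
set `G` has a dense orbit, which gives transitivity. -/

open Filter Set Topology

section

variable {X : Type*} [TopologicalSpace X] {g : X → X} {x : X}

theorem mem_omegaSet_iff_mapClusterPt {y : X} :
    y ∈ omegaSet g x ↔ MapClusterPt y atTop fun n => g^[n] x := by
  rw [mapClusterPt_atTop_iff_forall_mem_closure, omegaSet, mem_iInter]
  rfl

theorem omegaSet_subset_closure_range_iterate :
    omegaSet g x ⊆ closure (range fun n => g^[n] x) := fun _ hy =>
  closure_mono (by rintro _ ⟨n, -, rfl⟩; exact mem_range_self n) (mem_iInter.mp hy 0)

theorem denseRange_iterate_of_dense_omegaSet (h : Dense (omegaSet g x)) :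
    DenseRange fun n => g^[n] x :=
  dense_closure.mp (h.mono omegaSet_subset_closure_range_iterate)

theorem topTransitive_of_dense_setOf_denseRange_iterate
    (h : Dense {x | DenseRange fun n => g^[n] x}) : TopTransitive g := by
  intro U V hU hV hUne hVne
  obtain ⟨u, hu, huU⟩ := h.exists_mem_open hU hUne
  obtain ⟨n, hn⟩ := hu.exists_mem_open hV hVne
  exact ⟨n, g^[n] u, mem_image_of_mem _ huU, hn⟩

theorem recurrentPt_iff_mapClusterPt [FirstCountableTopology X] :
    RecurrentPt g x ↔ MapClusterPt x atTop fun n => g^[n] x := by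
  constructor
  · rintro ⟨n, hn, -, hlim⟩
    exact hlim.mapClusterPt.of_comp hn.tendsto_atTop
  · intro hx
    obtain ⟨ψ, hψ, hlim⟩ := hx.tendsto_subseq
    -- drop the first term so that all return times are positive
    refine ⟨fun k => ψ (k + 1), fun a b hab => hψ (by omega), fun k => ?_,
      hlim.comp (tendsto_add_atTop_nat 1)⟩
    exact (Nat.le_add_left 1 k).trans (hψ.id_le (k + 1))

theorem RecurrentPt.mem_omegaSet [FirstCountableTopology X] (h : RecurrentPt g x) :
    x ∈ omegaSet g x :=
  mem_omegaSet_iff_mapClusterPt.mpr (recurrentPt_iff_mapClusterPt.mp h)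

end

theorem isGδ_setOf_recurrentPt {X : Type*} [PseudoMetricSpace X] {g : X → X}
    (hg : Continuous g) : IsGδ {x | RecurrentPt g x} := by
  have hset : {x | RecurrentPt g x} =
      ⋂ j : ℕ, ⋂ m : ℕ, ⋃ k ≥ m, {x | dist (g^[k] x) x < 1 / (j + 1)} := by
    ext x
    simp only [mem_ofPred_eq, recurrentPt_iff_mapClusterPt,
      Metric.nhds_basis_ball_inv_nat_succ.mapClusterPt_iff_frequently, frequently_atTop,
      Metric.mem_ball, mem_iInter, mem_iUnion, exists_prop, true_imp_iff, ge_iff_le]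
  rw [hset]
  refine .iInter fun j => .iInter fun m => (isOpen_biUnion fun k _ => ?_).isGδ
  exact isOpen_lt ((hg.iterate k).dist continuous_id) continuous_const

theorem weaklyIndecomposable_implies_transitive_general {X : Type*} [MetricSpace X] [BaireSpace X]
    (f : X → X) (hf : Continuous f) (hrec : Dense {x : X | RecurrentPt f x})
    (hweak : WeaklyIndecomposable f) : TopTransitive f := by
  obtain ⟨S, ⟨G, hGS, hGδ, hG⟩, hω, -⟩ := hweak
  have hRG : Dense ({x | RecurrentPt f x} ∩ G) :=
    hrec.inter_of_Gδ (isGδ_setOf_recurrentPt hf) hGδ hG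
  refine topTransitive_of_dense_setOf_denseRange_iterate (hG.mono fun u hu => ?_)
  refine denseRange_iterate_of_dense_omegaSet (hRG.mono fun p hp => ?_)
  obtain ⟨hp, hpG⟩ := hp
  rw [hω u (hGS hu) p (hGS hpG)]
  exact hp.mem_omegaSet

theorem weaklyIndecomposable_implies_transitive {X : Type*} [MetricSpace X]
    [TopologicalSpace.SeparableSpace X] [BaireSpace X]
    (f : X → X) (hf : Continuous f) (hrec : Dense {x : X | RecurrentPt f x})
    (hweak : WeaklyIndecomposable f) : TopTransitive f :=
  weaklyIndecomposable_implies_transitive_general f hf hrec hweak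
end

section
/- Let X be a separable metric space which is a Baire space and has infinitely many points, and let f : X → X be a continuous map. Then f is Devaney chaotic (i.e., f is topologically transitive, has a dense set of periodic points, and has sensitive dependence on initial conditions) if and only if f is weakly indecomposable and has a dense set of periodic points. -/
/-- The periodic points of `g` are dense. -/
def DensePeriodicPts {Y : Type*} [TopologicalSpace Y] (g : Y → Y) : Prop :=
  Dense {x : Y | ∃ n : ℕ, 1 ≤ n ∧ g^[n] x = x}

/-- Sensitive dependence on initial conditions. -/
def Sensitive {Y : Type*} [MetricSpace Y] (g : Y → Y) : Prop :=
  ∃ δ : ℝ, 0 < δ ∧ ∀ x : Y, ∀ ε : ℝ, 0 < ε →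
    ∃ y : Y, dist x y < ε ∧ ∃ n : ℕ, δ < dist (g^[n] x) (g^[n] y)

/-- Devaney chaos: transitivity, dense periodic points, and sensitivity. -/
def DevaneyChaotic {Y : Type*} [MetricSpace Y] (g : Y → Y) : Prop :=
  TopTransitive g ∧ DensePeriodicPts g ∧ Sensitive g

/-!
Points with dense orbit form a residual set under transitivity, and sensitivity rules out
isolated points, so a dense orbit has full ω-limit set: Devaney chaos gives weak
indecomposability. Conversely, dense periodic points make the recurrent points `x ∈ ω(x)`
residual; for generic `x ∈ U` and `y ∈ V` we get `y ∈ ω(y) = ω(x)`, so the orbit of `x` enters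
`V`, which is transitivity. Sensitivity then follows as in Banks–Brooks–Cairns–Davis–Stacey:
two periodic orbits at positive distance give every point a far-away orbit, which a
transitive orbit starting near a periodic point shadows at a multiple of its period.
-/

open Set Filter Topology TopologicalSpace Metric Function

section Dynamics

variable {X : Type*} {f : X → X}

theorem densePeriodicPts_iff [TopologicalSpace X] : DensePeriodicPts f ↔ Dense (periodicPts f) :=
  Iff.rfl

theorem finite_range_iterate_of_mem_periodicPts {p : X} (hp : p ∈ periodicPts f) :
    (range fun n => f^[n] p).Finite := by
  obtain ⟨m, hm, hpm⟩ := mem_periodicPts.1 hp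
  refine ((finite_Iio m).image fun n => f^[n] p).subset ?_
  rintro _ ⟨n, rfl⟩
  exact ⟨n % m, Nat.mod_lt n hm, hpm.iterate_mod_apply n⟩

theorem disjoint_range_iterate_of_mem_periodicPts {p q : X} (hq : q ∈ periodicPts f)
    (hqp : q ∉ range fun n => f^[n] p) :
    Disjoint (range fun n => f^[n] p) (range fun n => f^[n] q) := by
  rw [Set.disjoint_right]
  rintro _ ⟨j, rfl⟩ ⟨i, hi : f^[i] p = f^[j] q⟩
  obtain ⟨m, hm, hqm⟩ := mem_periodicPts.1 hq
  have hj : j ≤ m * (j + 1) := (Nat.le_succ j).trans (Nat.le_mul_of_pos_left _ hm)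
  refine hqp ⟨m * (j + 1) - j + i, ?_⟩
  dsimp only
  rw [iterate_add_apply, hi, ← iterate_add_apply, Nat.sub_add_cancel hj, (hqm.mul_const _).eq]

section Topological

variable [TopologicalSpace X]

theorem residualSet_iff_mem_residual [BaireSpace X] {S : Set X} :
    ResidualSet S ↔ S ∈ residual X :=
  mem_residual.symm

theorem mem_omegaSet_iff {x y : X} :
    y ∈ omegaSet f x ↔ ∀ n, ∀ U ∈ 𝓝 y, ∃ k, n ≤ k ∧ f^[k] x ∈ U := by
  simp only [omegaSet, mem_iInter, mem_closure_iff_nhds]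
  exact forall₃_congr fun n U _ =>
    ⟨fun ⟨_, hU, k, hk, hkx⟩ => ⟨k, hk, hkx ▸ hU⟩, fun ⟨k, hk, hU⟩ => ⟨_, hU, k, hk, rfl⟩⟩

theorem omegaSet_eq_univ_of_dense_range [T1Space X] [∀ x : X, NeBot (𝓝[≠] x)] {x : X}
    (h : Dense (range fun n => f^[n] x)) : omegaSet f x = univ := by
  refine eq_univ_of_forall fun y => mem_iInter.2 fun n => ?_
  have htail : (range fun k => f^[k] x) \ ((fun k => f^[k] x) '' Iio n) ⊆
      {y | ∃ k, n ≤ k ∧ f^[k] x = y} := by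
    rintro _ ⟨⟨k, rfl⟩, hk⟩
    exact ⟨k, not_lt.1 fun hkn => hk ⟨k, hkn, rfl⟩, rfl⟩
  exact closure_mono htail ((h.sdiff_finite ((finite_Iio n).image _)).closure_eq ▸ mem_univ y)

theorem dense_union_compl_closure {A V : Set X} (h : V ⊆ closure A) :
    Dense (A ∪ (closure V)ᶜ) := by
  intro x
  by_cases hx : x ∈ closure V
  · exact closure_mono subset_union_left (closure_minimal h isClosed_closure hx)
  · exact subset_closure (Or.inr hx)

variable [SecondCountableTopology X]

theorem TopTransitive.eventually_residual_dense_range (ht : TopTransitive f)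
    (hf : Continuous f) : ∀ᶠ x in residual X, Dense (range fun n => f^[n] x) := by
  have hvisit : ∀ V ∈ countableBasis X, ∀ᶠ x in residual X, ∃ n, f^[n] x ∈ V := by
    intro V hV
    have hVo := isOpen_of_mem_countableBasis hV
    have hdense : Dense (⋃ n, f^[n] ⁻¹' V) := by
      refine dense_iff_inter_open.2 fun U hU hUne => ?_
      obtain ⟨n, _, ⟨u, hu, rfl⟩, hnV⟩ :=
        ht U V hU hVo hUne (nonempty_of_mem_countableBasis hV)
      exact ⟨u, hu, mem_iUnion.2 ⟨n, hnV⟩⟩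
    exact mem_of_superset
      (residual_of_dense_open (isOpen_iUnion fun n => hVo.preimage (hf.iterate n)) hdense)
      fun x hx => mem_iUnion.1 hx
  filter_upwards [(eventually_countable_ball (countable_countableBasis X)).2 hvisit] with x hx
  refine (isBasis_countableBasis X).dense_iff.2 fun V hV _ => ?_
  obtain ⟨n, hn⟩ := hx V hV
  exact ⟨_, hn, n, rfl⟩

theorem eventually_residual_mem_omegaSet (hf : Continuous f) (hp : Dense (periodicPts f)) :
    ∀ᶠ x in residual X, x ∈ omegaSet f x := by
  have hreturn : ∀ V ∈ countableBasis X, ∀ n : ℕ,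
      ∀ᶠ x in residual X, x ∈ closure V → ∃ k, n ≤ k ∧ f^[k] x ∈ V := by
    intro V hV n
    have hVo := isOpen_of_mem_countableBasis hV
    set A := ⋃ k, ⋃ (_ : n ≤ k), f^[k] ⁻¹' V
    have hAo : IsOpen A := isOpen_iUnion fun k => isOpen_iUnion fun _ => hVo.preimage (hf.iterate k)
    have hVA : V ⊆ closure A := by
      refine (hp.open_subset_closure_inter hVo).trans (closure_mono ?_)
      rintro x ⟨hxV, hx⟩
      obtain ⟨m, hm, hxm⟩ := mem_periodicPts.1 hx
      refine mem_iUnion₂.2 ⟨m * n, Nat.le_mul_of_pos_left n hm, ?_⟩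
      rwa [mem_preimage, (hxm.mul_const n).eq]
    filter_upwards [residual_of_dense_open (hAo.union isClosed_closure.isOpen_compl)
      (dense_union_compl_closure hVA)] with x hx hxV
    rcases hx with hx | hx
    · simpa [A] using hx
    · exact absurd hxV hx
  filter_upwards [(eventually_countable_ball (countable_countableBasis X)).2
    fun V hV => eventually_countable_forall.2 (hreturn V hV)] with x hx
  refine mem_omegaSet_iff.2 fun n U hU => ?_
  obtain ⟨V, hV, hxV, hVU⟩ := (isBasis_countableBasis X).mem_nhds_iff.1 hU
  obtain ⟨k, hk, hkV⟩ := hx V hV n (subset_closure hxV)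
  exact ⟨k, hk, hVU hkV⟩

theorem WeaklyIndecomposable.topTransitive [BaireSpace X] (hwi : WeaklyIndecomposable f)
    (hf : Continuous f) (hp : Dense (periodicPts f)) : TopTransitive f := by
  obtain ⟨S, hS, hsame, -⟩ := hwi
  have hgen : Dense (S ∩ {x | x ∈ omegaSet f x}) := dense_of_mem_residual <|
    inter_mem (residualSet_iff_mem_residual.1 hS) (eventually_residual_mem_omegaSet hf hp)
  intro U V hU hV hUne hVne
  obtain ⟨x, hxU, hxS, -⟩ := hgen.inter_open_nonempty U hU hUne
  obtain ⟨y, hyV, hyS, hy : y ∈ omegaSet f y⟩ := hgen.inter_open_nonempty V hV hVne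
  rw [hsame y hyS x hxS] at hy
  obtain ⟨k, -, hk⟩ := mem_omegaSet_iff.1 hy 0 V (hV.mem_nhds hyV)
  exact ⟨k, f^[k] x, mem_image_of_mem _ hxU, hk⟩

end Topological

section Metric

variable [MetricSpace X]

theorem Sensitive.nhdsNE_neBot (hs : Sensitive f) (x : X) : NeBot (𝓝[≠] x) := by
  obtain ⟨δ, hδ, hsen⟩ := hs
  refine mem_closure_iff_nhdsWithin_neBot.1 (Metric.mem_closure_iff.2 fun ε hε => ?_)
  obtain ⟨y, hy, n, hn⟩ := hsen x ε hε
  refine ⟨y, fun hyx => ?_, hy⟩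
  rw [mem_singleton_iff.1 hyx, dist_self] at hn
  linarith

theorem TopTransitive.weaklyIndecomposable_of_sensitive [SecondCountableTopology X]
    [BaireSpace X] (ht : TopTransitive f) (hf : Continuous f) (hs : Sensitive f) :
    WeaklyIndecomposable f := by
  have := hs.nhdsNE_neBot
  have homega : ∀ x ∈ {x | Dense (range fun n => f^[n] x)}, omegaSet f x = univ :=
    fun x hx => omegaSet_eq_univ_of_dense_range hx
  exact ⟨_, residualSet_iff_mem_residual.2 (ht.eventually_residual_dense_range hf),
    fun x hx y hy => by rw [homega x hx, homega y hy], fun x hx => ⟨x, homega x hx ▸ mem_univ x⟩⟩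

theorem exists_pos_forall_exists_le_dist_iterate [Infinite X] (hp : Dense (periodicPts f)) :
    ∃ η > 0, ∀ x : X, ∃ q : X, ∀ n, η ≤ dist x (f^[n] q) := by
  obtain ⟨p, hp₀⟩ := hp.nonempty
  have hPfin := finite_range_iterate_of_mem_periodicPts hp₀
  obtain ⟨q, hqP, hq₀⟩ :=
    hp.inter_open_nonempty _ hPfin.isClosed.isOpen_compl hPfin.infinite_compl.nonempty
  obtain ⟨r, hr, hsep⟩ := Metric.exists_pos_forall_lt_edist hPfin.isCompact
    (finite_range_iterate_of_mem_periodicPts hq₀).isClosed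
    (disjoint_range_iterate_of_mem_periodicPts hq₀ hqP)
  refine ⟨r / 2, by positivity, fun x => ?_⟩
  by_cases hfar : ∀ n, (r : ℝ) / 2 ≤ dist x (f^[n] p)
  · exact ⟨p, hfar⟩
  push Not at hfar
  obtain ⟨i, hi⟩ := hfar
  refine ⟨q, fun j => ?_⟩
  have hij := hsep _ ⟨i, rfl⟩ _ ⟨j, rfl⟩
  rw [edist_nndist, ENNReal.coe_lt_coe, ← NNReal.coe_lt_coe, coe_nndist] at hij
  linarith [dist_triangle (f^[i] p) x (f^[j] q), dist_comm x (f^[i] p)]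

theorem TopTransitive.exists_dist_iterate_mul_lt (ht : TopTransitive f) (hf : Continuous f)
    {U : Set X} (hU : IsOpen U) (hUne : U.Nonempty) {m : ℕ} (hm : 0 < m) (q : X) {δ : ℝ}
    (hδ : 0 < δ) : ∃ y ∈ U, ∃ t j : ℕ, dist (f^[m * t] y) (f^[j] q) < δ := by
  -- Shadowing `m + 1` iterates of `q` suffices: every time is at most `m` before a multiple of `m`.
  set V := ⋂ i ∈ Finset.range (m + 1), f^[i] ⁻¹' ball (f^[i] q) δ
  have hVo : IsOpen V := isOpen_biInter_finset fun i _ => isOpen_ball.preimage (hf.iterate i)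
  have hVne : V.Nonempty := ⟨q, mem_iInter₂.2 fun i _ => mem_ball_self hδ⟩
  obtain ⟨k, _, ⟨y, hyU, rfl⟩, hyV⟩ := ht U V hU hVo hUne hVne
  obtain ⟨t, j, hjm, hmt⟩ : ∃ t j, j ≤ m ∧ m * t = j + k := by
    refine ⟨k / m + 1, m - k % m, Nat.sub_le _ _, ?_⟩
    have := Nat.div_add_mod k m
    have := Nat.mod_lt k hm
    rw [mul_add, mul_one]
    omega
  refine ⟨y, hyU, t, j, ?_⟩
  rw [hmt, iterate_add_apply]
  exact mem_iInter₂.1 hyV j (Finset.mem_range.2 (Nat.lt_succ_of_le hjm))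

theorem TopTransitive.sensitive [Infinite X] (ht : TopTransitive f) (hf : Continuous f)
    (hp : Dense (periodicPts f)) : Sensitive f := by
  obtain ⟨η, hη, hfar⟩ := exists_pos_forall_exists_le_dist_iterate hp
  refine ⟨η / 4, by positivity, fun x ε hε => ?_⟩
  set ρ := min ε (η / 4)
  have hρ : 0 < ρ := lt_min hε (by positivity)
  obtain ⟨p, hpx, hp₀⟩ := hp.inter_open_nonempty (ball x ρ) isOpen_ball ⟨x, mem_ball_self hρ⟩
  obtain ⟨m, hm, hpm⟩ := mem_periodicPts.1 hp₀
  obtain ⟨q, hq⟩ := hfar x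
  obtain ⟨y, hyx, t, j, hy⟩ := ht.exists_dist_iterate_mul_lt hf isOpen_ball
    ⟨x, mem_ball_self hρ⟩ hm q (by positivity : 0 < η / 4)
  have hpt : f^[m * t] p = p := (hpm.mul_const t).eq
  rw [mem_ball, dist_comm] at hpx hyx
  have hρε : ρ ≤ ε := min_le_left _ _
  have hρη : ρ ≤ η / 4 := min_le_right _ _
  have hpy : η / 2 < dist (f^[m * t] p) (f^[m * t] y) := by
    rw [hpt]
    linarith [hq j, dist_triangle4 x p (f^[m * t] y) (f^[j] q)]
  by_cases hxy : η / 4 < dist (f^[m * t] x) (f^[m * t] y)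
  · exact ⟨y, hyx.trans_le hρε, m * t, hxy⟩
  · refine ⟨p, hpx.trans_le hρε, m * t, ?_⟩
    linarith [dist_triangle (f^[m * t] p) (f^[m * t] x) (f^[m * t] y),
      dist_comm (f^[m * t] x) (f^[m * t] p)]

end Metric

end Dynamics

theorem devaneyChaotic_iff_weaklyIndecomposable_and_densePeriodic
    {X : Type*} [MetricSpace X] [TopologicalSpace.SeparableSpace X] [BaireSpace X]
    [Infinite X] (f : X → X) (hf : Continuous f) :
    DevaneyChaotic f ↔ (WeaklyIndecomposable f ∧ DensePeriodicPts f) := by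
  have : SecondCountableTopology X := UniformSpace.secondCountable_of_separable X
  constructor
  · rintro ⟨ht, hp, hs⟩
    exact ⟨ht.weaklyIndecomposable_of_sensitive hf hs, hp⟩
  · rintro ⟨hwi, hp⟩
    rw [densePeriodicPts_iff] at hp
    have ht := hwi.topTransitive hf hp
    exact ⟨ht, densePeriodicPts_iff.2 hp, ht.sensitive hf hp⟩
end

section
/- Let I ⊆ ℝ be an interval and f : I → I a continuous map. Suppose J ⊆ I is a subinterval containing no periodic point of f, and suppose z ∈ I and positive integers m < n satisfy z ∈ J, f^m(z) ∈ J, and f^n(z) ∈ J. Then either z < f^m(z) < f^n(z) or z > f^m(z) > f^n(z). -/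
/-!
Since `J` is an interval containing no fixed point of the continuous map `f^[k]`, the
intermediate value theorem forces `f^[k] x - x` to have one sign on all of `J`, for each
`k ≥ 1`. Say `z < f^[m] z`, and put `p = n - m`, `w = f^[m] z`, so `f^[n] z = f^[p] w`.
If we had `f^[p] w < w`, then `f^[p]` would move every point of `J` down while `f^[m]` moves
every point up. Chaining `z < f^[m] z < f^[2m] z < ⋯` (each comparison made at a point of `J`)
shows that every `f^[jm]` moves `J` up, and likewise every `f^[jp]` moves `J` down; the common
iterate `f^[mp]` would have to do both.
-/

open Function

theorem IsPreconnected.forall_lt_or_forall_gt_of_forall_ne {α β : Type*}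
    [TopologicalSpace α] [TopologicalSpace β] [LinearOrder β] [OrderClosedTopology β]
    {s : Set α} (hs : IsPreconnected s) {f g : α → β} (hf : ContinuousOn f s)
    (hg : ContinuousOn g s) (hne : ∀ x ∈ s, f x ≠ g x) :
    (∀ x ∈ s, f x < g x) ∨ (∀ x ∈ s, g x < f x) := by
  by_contra! h
  obtain ⟨⟨a, ha, hga⟩, ⟨b, hb, hfb⟩⟩ := h
  obtain ⟨x, hx, hfgx⟩ := hs.intermediate_value₂ hb ha hf hg hfb hga
  exact hne x hx hfgx

section IterateSign

variable {α : Type*} [LinearOrder α] {f : α → α} {J : Set α}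

def IteratesMoveOneWayOn (f : α → α) (J : Set α) : Prop :=
  ∀ k, 0 < k → (∀ x ∈ J, x < f^[k] x) ∨ (∀ x ∈ J, f^[k] x < x)

theorem IteratesMoveOneWayOn.dual (hsign : IteratesMoveOneWayOn f J) :
    IteratesMoveOneWayOn (α := αᵒᵈ) f J :=
  fun k hk ↦ (hsign k hk).symm

theorem IteratesMoveOneWayOn.forall_lt_iterate (hsign : IteratesMoveOneWayOn f J)
    {k : ℕ} {z : α} (hz : z ∈ J) (h : z < f^[k] z) : ∀ x ∈ J, x < f^[k] x := by
  have hk : 0 < k := Nat.pos_of_ne_zero fun hk ↦ by simp [hk] at h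
  exact (hsign k hk).resolve_right fun hdown ↦ (hdown z hz).asymm h

theorem IteratesMoveOneWayOn.forall_lt_iterate_mul (hsign : IteratesMoveOneWayOn f J)
    {m : ℕ} {z : α} (hz : z ∈ J) (hzm : f^[m] z ∈ J) (h : z < f^[m] z) :
    ∀ j, 0 < j → ∀ x ∈ J, x < f^[j * m] x := by
  intro j hj
  induction j, hj using Nat.le_induction with
  | base => simpa using hsign.forall_lt_iterate hz h
  | succ j _ ih =>
    refine hsign.forall_lt_iterate hz ?_
    calc z < f^[m] z := h
      _ < f^[j * m] (f^[m] z) := ih _ hzm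
      _ = f^[(j + 1) * m] z := by rw [← iterate_add_apply, Nat.succ_mul]

theorem IteratesMoveOneWayOn.iterate_lt_iterate (hsign : IteratesMoveOneWayOn f J)
    {m n : ℕ} (hmn : m < n) {z : α} (hz : z ∈ J) (hzm : f^[m] z ∈ J) (hzn : f^[n] z ∈ J)
    (h : z < f^[m] z) : f^[m] z < f^[n] z := by
  obtain ⟨p, rfl⟩ := Nat.exists_eq_add_of_lt hmn
  have hp : 0 < p + 1 := p.succ_pos
  have hsplit : f^[m + p + 1] z = f^[p + 1] (f^[m] z) := by
    rw [← iterate_add_apply]; ring_nf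
  rw [hsplit] at hzn ⊢
  refine ((hsign (p + 1) hp).resolve_right fun hdown ↦ ?_) _ hzm
  have hm : 0 < m := Nat.pos_of_ne_zero fun hm ↦ by simp [hm] at h
  have hup_mul := hsign.forall_lt_iterate_mul hz hzm h (p + 1) hp z hz
  have hdown_mul := hsign.dual.forall_lt_iterate_mul hzm hzn (hdown _ hzm) m hm z hz
  rw [Nat.mul_comm] at hdown_mul
  exact hup_mul.asymm hdown_mul

end IterateSign

theorem interval_no_periodic_orbit_monotone_general
    (I : Set ℝ) (f : ℝ → ℝ)
    (hf : ContinuousOn f I) (hmaps : Set.MapsTo f I I)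
    (J : Set ℝ) (hJI : J ⊆ I) (hJ : J.OrdConnected)
    (hnoper : ∀ x ∈ J, ∀ k : ℕ, 1 ≤ k → f^[k] x ≠ x)
    (z : ℝ) (m n : ℕ) (hm : 0 < m) (hmn : m < n)
    (hz : z ∈ J) (hzm : f^[m] z ∈ J) (hzn : f^[n] z ∈ J) :
    (z < f^[m] z ∧ f^[m] z < f^[n] z) ∨ (f^[n] z < f^[m] z ∧ f^[m] z < z) := by
  have hsign : IteratesMoveOneWayOn f J := fun k hk ↦
    hJ.isPreconnected.forall_lt_or_forall_gt_of_forall_ne continuousOn_id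
      ((hf.iterate hmaps k).mono hJI) fun x hx ↦ (hnoper x hx k hk).symm
  rcases (hnoper z hz m hm).lt_or_gt with hdown | hup
  · exact .inr ⟨hsign.dual.iterate_lt_iterate hmn hz hzm hzn hdown, hdown⟩
  · exact .inl ⟨hup, hsign.iterate_lt_iterate hmn hz hzm hzn hup⟩

theorem interval_no_periodic_orbit_monotone
    (I : Set ℝ) (hI : I.OrdConnected) (f : ℝ → ℝ)
    (hf : ContinuousOn f I) (hmaps : Set.MapsTo f I I)
    (J : Set ℝ) (hJI : J ⊆ I) (hJ : J.OrdConnected)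
    (hnoper : ∀ x ∈ J, ∀ k : ℕ, 1 ≤ k → f^[k] x ≠ x)
    (z : ℝ) (m n : ℕ) (hm : 0 < m) (hmn : m < n)
    (hz : z ∈ J) (hzm : f^[m] z ∈ J) (hzn : f^[n] z ∈ J) :
    (z < f^[m] z ∧ f^[m] z < f^[n] z) ∨ (f^[n] z < f^[m] z ∧ f^[m] z < z) :=
  interval_no_periodic_orbit_monotone_general I f hf hmaps J hJI hJ hnoper z m n hm hmn hz hzm hzn
end

section
/- Let f : [0,1] → [0,1] be the continuous piecewise-linear map defined by f(x) = -2x + 1 for x ∈ [0, 1/6], f(x) = 2x + 1/3 for x ∈ [1/6, 1/3], f(x) = -3x + 2 for x ∈ [1/3, 2/3], and f(x) = x - 2/3 for x ∈ [2/3, 1]. Then f is strongly indecomposable: for every sequence (A_n)_{n≥1} of f-invariant closed subsets of [0,1] each having nonempty interior, ⋂_{n≥1} A_n has nonempty interior. -/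
open Set

section Covers

variable {S : Set ℝ} {g g' : S → S} {a b c d e e' a' b' c' d' : ℝ}

/-- The image under `g` of the part of `S` in `[a,b]` contains the part of `S` in `[c,d]`. -/
def Covers (g : S → S) (a b c d : ℝ) : Prop :=
  Subtype.val ⁻¹' Icc c d ⊆ g '' (Subtype.val ⁻¹' Icc a b)

theorem Covers.mono (h : Covers g a b c d) (ha : a' ≤ a) (hb : b ≤ b') (hc : c ≤ c')
    (hd : d' ≤ d) : Covers g a' b' c' d' :=
  (preimage_mono (Icc_subset_Icc hc hd)).trans
    (h.trans (image_mono (preimage_mono (Icc_subset_Icc ha hb))))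

theorem Covers.comp (hg : Covers g a b c d) (hg' : Covers g' c d e e') :
    Covers (g' ∘ g) a b e e' := by
  rw [Covers, image_comp]
  exact hg'.trans (image_mono hg)

theorem covers_of_eq_affine {m k : ℝ} (hS : Icc a b ⊆ S) (hm : 0 < m)
    (hg : ∀ x : S, (x : ℝ) ∈ Icc a b → (g x : ℝ) = m * x + k) :
    Covers g a b (m * a + k) (m * b + k) := by
  rintro y ⟨hay, hyb⟩
  have hx : (y - k) / m ∈ Icc a b :=
    ⟨(le_div_iff₀ hm).2 (by linarith), (div_le_iff₀ hm).2 (by linarith)⟩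
  refine ⟨⟨_, hS hx⟩, hx, Subtype.ext ?_⟩
  rw [hg _ hx, mul_div_cancel₀ _ hm.ne']
  ring

theorem covers_of_eq_affine_of_neg {m k : ℝ} (hS : Icc a b ⊆ S) (hm : m < 0)
    (hg : ∀ x : S, (x : ℝ) ∈ Icc a b → (g x : ℝ) = m * x + k) :
    Covers g a b (m * b + k) (m * a + k) := by
  rintro y ⟨hby, hya⟩
  have hx : (y - k) / m ∈ Icc a b :=
    ⟨(le_div_iff_of_neg hm).2 (by linarith), (div_le_iff_of_neg hm).2 (by linarith)⟩
  refine ⟨⟨_, hS hx⟩, hx, Subtype.ext ?_⟩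
  rw [hg _ hx, mul_div_cancel₀ _ hm.ne]
  ring

def EventuallyCovers (g : S → S) (a b c d : ℝ) : Prop :=
  ∃ n, Covers g^[n] a b c d

theorem Covers.eventuallyCovers (h : Covers g a b c d) : EventuallyCovers g a b c d :=
  ⟨1, h⟩

theorem EventuallyCovers.mono (h : EventuallyCovers g a b c d) (ha : a' ≤ a) (hb : b ≤ b')
    (hc : c ≤ c') (hd : d' ≤ d) : EventuallyCovers g a' b' c' d' :=
  h.imp fun _ hn => hn.mono ha hb hc hd

theorem EventuallyCovers.trans (h : EventuallyCovers g a b c d)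
    (h' : EventuallyCovers g c d e e') : EventuallyCovers g a b e e' := by
  obtain ⟨m, hm⟩ := h
  obtain ⟨n, hn⟩ := h'
  exact ⟨n + m, by rw [Function.iterate_add]; exact hm.comp hn⟩

theorem EventuallyCovers.subset_of_mapsTo {A : Set S} (h : EventuallyCovers g a b c d)
    (hA : MapsTo g A A) (hab : Subtype.val ⁻¹' Icc a b ⊆ A) :
    Subtype.val ⁻¹' Icc c d ⊆ A := by
  obtain ⟨n, hn⟩ := h
  exact hn.trans ((image_mono hab).trans (hA.iterate n).image_subset)

end Covers

local notation "𝕀" => Set.Icc (0 : ℝ) 1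

theorem exists_preimage_Icc_subset_of_interior_nonempty {A : Set 𝕀} (h : (interior A).Nonempty) :
    ∃ a b : ℝ, 0 ≤ a ∧ a < b ∧ b ≤ 1 ∧ Subtype.val ⁻¹' Icc a b ⊆ A := by
  obtain ⟨x, hx⟩ := h
  obtain ⟨ε, hε, hball⟩ := Metric.mem_nhds_iff.mp (mem_interior_iff_mem_nhds.mp hx)
  obtain ⟨hx0, hx1⟩ := x.2
  refine ⟨max 0 (x - ε / 2), min 1 (x + ε / 2), le_max_left _ _,
    max_lt (lt_min one_pos (by linarith)) (lt_min (by linarith) (by linarith)),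
    min_le_left _ _, fun z ⟨hz, hz'⟩ => hball ?_⟩
  have hz₁ : (x : ℝ) - ε / 2 ≤ z := (le_max_right _ _).trans hz
  have hz₂ : (z : ℝ) ≤ x + ε / 2 := hz'.trans (min_le_right _ _)
  rw [Metric.mem_ball, Subtype.dist_eq, Real.dist_eq, abs_lt]
  constructor <;> linarith

structure IsExample31Map (f : 𝕀 → 𝕀) : Prop where
  piece₁ : ∀ x : 𝕀, (x : ℝ) ≤ 1/6 → (f x : ℝ) = -2*(x:ℝ) + 1
  piece₂ : ∀ x : 𝕀, 1/6 ≤ (x : ℝ) → (x : ℝ) ≤ 1/3 → (f x : ℝ) = 2*(x:ℝ) + 1/3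
  piece₃ : ∀ x : 𝕀, 1/3 ≤ (x : ℝ) → (x : ℝ) ≤ 2/3 → (f x : ℝ) = -3*(x:ℝ) + 2
  piece₄ : ∀ x : 𝕀, 2/3 ≤ (x : ℝ) → (f x : ℝ) = (x:ℝ) - 2/3

def Expands (f : 𝕀 → 𝕀) (a b : ℝ) : Prop :=
  ∃ c d, 0 ≤ c ∧ d ≤ 1 ∧ 6/5 * (b - a) ≤ d - c ∧ EventuallyCovers f a b c d

namespace IsExample31Map

variable {f : 𝕀 → 𝕀} {a b : ℝ}

theorem covers₁ (hf : IsExample31Map f) (ha : 0 ≤ a) (hb : b ≤ 1/6) :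
    Covers f a b (1 - 2*b) (1 - 2*a) :=
  (covers_of_eq_affine_of_neg (Icc_subset_Icc ha (by linarith)) (by norm_num)
    fun x hx => hf.piece₁ x (hx.2.trans hb)).mono le_rfl le_rfl (by linarith) (by linarith)

theorem covers₂ (hf : IsExample31Map f) (ha : 1/6 ≤ a) (hb : b ≤ 1/3) :
    Covers f a b (2*a + 1/3) (2*b + 1/3) :=
  covers_of_eq_affine (Icc_subset_Icc (by linarith) (by linarith)) (by norm_num)
    fun x hx => hf.piece₂ x (ha.trans hx.1) (hx.2.trans hb)

theorem covers₃ (hf : IsExample31Map f) (ha : 1/3 ≤ a) (hb : b ≤ 2/3) :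
    Covers f a b (2 - 3*b) (2 - 3*a) :=
  (covers_of_eq_affine_of_neg (Icc_subset_Icc (by linarith) (by linarith)) (by norm_num)
    fun x hx => hf.piece₃ x (ha.trans hx.1) (hx.2.trans hb)).mono
      le_rfl le_rfl (by linarith) (by linarith)

theorem covers₄ (hf : IsExample31Map f) (ha : 2/3 ≤ a) (hb : b ≤ 1) :
    Covers f a b (a - 2/3) (b - 2/3) :=
  (covers_of_eq_affine (k := -2/3) (Icc_subset_Icc (by linarith) hb) one_pos
    fun x hx => (hf.piece₄ x (ha.trans hx.1)).trans (by ring)).mono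
      le_rfl le_rfl (by linarith) (by linarith)

theorem eventuallyCovers_of_Icc_zero_sixth_subset (hf : IsExample31Map f) (ha : a ≤ 0)
    (hb : 1/6 ≤ b) : EventuallyCovers f a b (2/3) 1 :=
  (hf.covers₁ le_rfl le_rfl).eventuallyCovers.mono ha hb (by norm_num) (by norm_num)

theorem eventuallyCovers_of_Icc_sixth_third_subset (hf : IsExample31Map f) (ha : a ≤ 1/6)
    (hb : 1/3 ≤ b) : EventuallyCovers f a b (2/3) 1 :=
  (hf.covers₂ le_rfl le_rfl).eventuallyCovers.mono ha hb (by norm_num) (by norm_num)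

theorem eventuallyCovers_of_Icc_third_twoThirds_subset (hf : IsExample31Map f) (ha : a ≤ 1/3)
    (hb : 2/3 ≤ b) : EventuallyCovers f a b (2/3) 1 :=
  (hf.covers₃ le_rfl le_rfl).eventuallyCovers.mono ha hb (by norm_num) (by norm_num)

/-- `[0,m]` either contains `[0,1/6]` or is doubled by the piece of slope `-2`. -/
theorem eventuallyCovers_or_expands_of_eventuallyCovers_Icc_zero (hf : IsExample31Map f)
    {m : ℝ} (h : EventuallyCovers f a b 0 m) (hm : 3/5 * (b - a) ≤ m) :
    EventuallyCovers f a b (2/3) 1 ∨ Expands f a b := by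
  rcases le_or_gt (1/6) m with hm' | hm'
  · exact .inl (h.trans (hf.eventuallyCovers_of_Icc_zero_sixth_subset le_rfl hm'))
  · exact .inr ⟨1 - 2*m, 1, by linarith, le_rfl, by linarith,
      h.trans ((hf.covers₁ le_rfl hm'.le).mono le_rfl le_rfl le_rfl
        (by norm_num)).eventuallyCovers⟩

theorem eventuallyCovers_or_expands_of_le_one_third (hf : IsExample31Map f) (ha : 0 ≤ a)
    (hab : a < b) (hb : b ≤ 1/3) : EventuallyCovers f a b (2/3) 1 ∨ Expands f a b := by
  rcases le_or_gt b (1/6) with hb' | hb'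
  · exact .inr ⟨_, _, by linarith, by linarith, by linarith,
      (hf.covers₁ ha hb').eventuallyCovers⟩
  rcases le_or_gt (1/6) a with ha' | ha'
  · exact .inr ⟨_, _, by linarith, by linarith, by linarith,
      (hf.covers₂ ha' hb).eventuallyCovers⟩
  -- `f` maps `[a,b]` over `[2/3, 2/3 + 2w]`, `w` the longer half, and then over `[0, 2w]`
  rcases le_total (b - 1/6) (1/6 - a) with hw | hw
  · refine hf.eventuallyCovers_or_expands_of_eventuallyCovers_Icc_zero (m := 1/3 - 2*a)
      ?_ (by linarith)
    exact ((hf.covers₁ ha le_rfl).mono le_rfl hb'.le (by norm_num) le_rfl).eventuallyCovers.trans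
      ((hf.covers₄ le_rfl (by linarith)).mono le_rfl le_rfl (by norm_num)
        (by linarith)).eventuallyCovers
  · refine hf.eventuallyCovers_or_expands_of_eventuallyCovers_Icc_zero (m := 2*b - 1/3)
      ?_ (by linarith)
    exact ((hf.covers₂ le_rfl hb).mono ha'.le le_rfl (by norm_num) le_rfl).eventuallyCovers.trans
      ((hf.covers₄ le_rfl (by linarith)).mono le_rfl le_rfl (by norm_num)
        (by linarith)).eventuallyCovers

/-- The worst case, which fixes the factor `6/5`: the two halves of `[a,b]` are stretched by
`2` and by `3` onto intervals ending at `1`. -/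
theorem expands_of_mem_Ioo_one_third (hf : IsExample31Map f) (ha : 1/6 ≤ a) (ha' : a < 1/3)
    (hb' : 1/3 < b) (hb : b ≤ 2/3) : Expands f a b := by
  rcases le_total (3 * (b - 1/3)) (2 * (1/3 - a)) with hw | hw
  · exact ⟨_, 1, by linarith, le_rfl, by linarith,
      ((hf.covers₂ ha le_rfl).mono le_rfl hb'.le le_rfl (by norm_num)).eventuallyCovers⟩
  · exact ⟨2 - 3*b, 1, by linarith, le_rfl, by linarith,
      ((hf.covers₃ le_rfl hb).mono ha'.le le_rfl le_rfl (by norm_num)).eventuallyCovers⟩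

theorem eventuallyCovers_or_expands_of_mem_Ioo_two_thirds (hf : IsExample31Map f)
    (ha : 1/3 ≤ a) (ha' : a < 2/3) (hb' : 2/3 < b) (hb : b ≤ 1) :
    EventuallyCovers f a b (2/3) 1 ∨ Expands f a b := by
  rcases le_total (b - 2/3) (3 * (2/3 - a)) with hw | hw
  · exact hf.eventuallyCovers_or_expands_of_eventuallyCovers_Icc_zero (m := 2 - 3*a)
      ((hf.covers₃ ha le_rfl).mono le_rfl hb'.le (by norm_num) le_rfl).eventuallyCovers
      (by linarith)
  · exact hf.eventuallyCovers_or_expands_of_eventuallyCovers_Icc_zero (m := b - 2/3)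
      ((hf.covers₄ le_rfl hb).mono ha'.le le_rfl (by norm_num) le_rfl).eventuallyCovers
      (by linarith)

theorem eventuallyCovers_or_expands (hf : IsExample31Map f) (ha : 0 ≤ a) (hab : a < b)
    (hb : b ≤ 1) : EventuallyCovers f a b (2/3) 1 ∨ Expands f a b := by
  rcases le_or_gt b (1/3) with hb₁ | hb₁
  · exact hf.eventuallyCovers_or_expands_of_le_one_third ha hab hb₁
  rcases le_or_gt (2/3) a with ha₂ | ha₂
  · have hcov := (hf.covers₄ ha₂ hb).eventuallyCovers
    rcases hf.eventuallyCovers_or_expands_of_le_one_third (a := a - 2/3) (b := b - 2/3)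
        (by linarith) (by linarith) (by linarith) with h | ⟨c, d, hc, hd, hcd, h⟩
    · exact .inl (hcov.trans h)
    · exact .inr ⟨c, d, hc, hd, by linarith, hcov.trans h⟩
  rcases lt_or_ge a (1/6) with ha₀ | ha₀
  · exact .inl (hf.eventuallyCovers_of_Icc_sixth_third_subset ha₀.le hb₁.le)
  rcases lt_or_ge a (1/3) with ha₁ | ha₁ <;> rcases le_or_gt b (2/3) with hb₂ | hb₂
  · exact .inr (hf.expands_of_mem_Ioo_one_third ha₀ ha₁ hb₁ hb₂)
  · exact .inl (hf.eventuallyCovers_of_Icc_third_twoThirds_subset ha₁.le hb₂.le)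
  · exact .inr ⟨_, _, by linarith, by linarith, by linarith,
      (hf.covers₃ ha₁ hb₂).eventuallyCovers⟩
  · exact hf.eventuallyCovers_or_expands_of_mem_Ioo_two_thirds ha₁ ha₂ hb₂ hb

theorem eventuallyCovers_upper_third (hf : IsExample31Map f) (ha : 0 ≤ a) (hab : a < b)
    (hb : b ≤ 1) : EventuallyCovers f a b (2/3) 1 := by
  obtain ⟨k, hk⟩ := pow_unbounded_of_one_lt (1 / (b - a)) (by norm_num : (1:ℝ) < 6/5)
  rw [div_lt_iff₀ (by linarith)] at hk
  induction k generalizing a b with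
  | zero => linarith
  | succ k ih =>
    rcases hf.eventuallyCovers_or_expands ha hab hb with h | ⟨c, d, hc, hd, hcd, h⟩
    · exact h
    · have hpow : 0 < (6/5 : ℝ) ^ k := by positivity
      rw [pow_succ] at hk
      refine h.trans (ih hc ?_ hd ?_)
      · nlinarith
      · nlinarith [mul_le_mul_of_nonneg_left hcd hpow.le]

theorem preimage_Icc_zero_third_subset (hf : IsExample31Map f) {A : Set 𝕀}
    (hA : MapsTo f A A) (hint : (interior A).Nonempty) :
    Subtype.val ⁻¹' Icc 0 (1/3) ⊆ A := by
  obtain ⟨a, b, ha, hab, hb, hsub⟩ := exists_preimage_Icc_subset_of_interior_nonempty hint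
  have hupper := (hf.eventuallyCovers_upper_third ha hab hb).subset_of_mapsTo hA hsub
  exact ((hf.covers₄ le_rfl le_rfl).mono le_rfl le_rfl (by norm_num) (by norm_num)
    ).eventuallyCovers.subset_of_mapsTo hA hupper

end IsExample31Map

theorem example31_stronglyIndecomposable_general
    (f : Set.Icc (0:ℝ) 1 → Set.Icc (0:ℝ) 1)
    (h1 : ∀ x : Set.Icc (0:ℝ) 1, (x:ℝ) ≤ 1/6 → (f x : ℝ) = -2*(x:ℝ) + 1)
    (h2 : ∀ x : Set.Icc (0:ℝ) 1, 1/6 ≤ (x:ℝ) → (x:ℝ) ≤ 1/3 → (f x : ℝ) = 2*(x:ℝ) + 1/3)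
    (h3 : ∀ x : Set.Icc (0:ℝ) 1, 1/3 ≤ (x:ℝ) → (x:ℝ) ≤ 2/3 → (f x : ℝ) = -3*(x:ℝ) + 2)
    (h4 : ∀ x : Set.Icc (0:ℝ) 1, 2/3 ≤ (x:ℝ) → (f x : ℝ) = (x:ℝ) - 2/3) :
    StronglyIndecomposable f := by
  have hf : IsExample31Map f := ⟨h1, h2, h3, h4⟩
  intro A _ hinv hint
  have hlower : Subtype.val ⁻¹' Icc 0 (1/3) ⊆ ⋂ n, A n := fun x hx => mem_iInter.2 fun n =>
    hf.preimage_Icc_zero_third_subset (mapsTo_iff_image_subset.2 (hinv n)) (hint n) hx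
  have hopen : IsOpen (Subtype.val ⁻¹' Iio (1/3) : Set 𝕀) :=
    isOpen_Iio.preimage continuous_subtype_val
  exact ⟨⟨0, by norm_num⟩, mem_interior.2
    ⟨_, fun x hx => hlower ⟨x.2.1, le_of_lt hx⟩, hopen, show (0:ℝ) < 1/3 by norm_num⟩⟩

theorem example31_stronglyIndecomposable
    (f : Set.Icc (0:ℝ) 1 → Set.Icc (0:ℝ) 1) (hf : Continuous f)
    (h1 : ∀ x : Set.Icc (0:ℝ) 1, (x:ℝ) ≤ 1/6 → (f x : ℝ) = -2*(x:ℝ) + 1)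
    (h2 : ∀ x : Set.Icc (0:ℝ) 1, 1/6 ≤ (x:ℝ) → (x:ℝ) ≤ 1/3 → (f x : ℝ) = 2*(x:ℝ) + 1/3)
    (h3 : ∀ x : Set.Icc (0:ℝ) 1, 1/3 ≤ (x:ℝ) → (x:ℝ) ≤ 2/3 → (f x : ℝ) = -3*(x:ℝ) + 2)
    (h4 : ∀ x : Set.Icc (0:ℝ) 1, 2/3 ≤ (x:ℝ) → (f x : ℝ) = (x:ℝ) - 2/3) :
    StronglyIndecomposable f :=
  example31_stronglyIndecomposable_general f h1 h2 h3 h4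
end

section
/- Let f : [0,1] → [0,1] be the continuous piecewise-linear map defined by f(x) = -2x + 1 for x ∈ [0, 1/6], f(x) = 2x + 1/3 for x ∈ [1/6, 1/3], f(x) = -3x + 2 for x ∈ [1/3, 2/3], and f(x) = x - 2/3 for x ∈ [2/3, 1]. Then f is not topologically transitive. -/
/-!
The union `[0, 1/3] ∪ [2/3, 1]` is forward invariant under `f`: both branches on `[0, 1/3]`
land in `[2/3, 1]`, and the branch on `[2/3, 1]` lands in `[0, 1/3]`.
So no iterate of the open set `[0, 1/3)` ever meets the open interval `(1/3, 2/3)`.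
-/

open Set

theorem not_topTransitive_of_mapsTo {Y : Type*} [TopologicalSpace Y] {g : Y → Y}
    {A U V : Set Y} (hA : MapsTo g A A) (hU : IsOpen U) (hV : IsOpen V)
    (hU₀ : U.Nonempty) (hV₀ : V.Nonempty) (hUA : U ⊆ A) (hVA : Disjoint V A) :
    ¬ TopTransitive g := by
  intro htrans
  obtain ⟨n, y, ⟨x, hxU, rfl⟩, hyV⟩ := htrans U V hU hV hU₀ hV₀
  exact hVA.notMem_of_mem_left hyV ((hA.iterate n) (hUA hxU))

theorem mapsTo_outer_thirds (f : Icc (0:ℝ) 1 → Icc (0:ℝ) 1)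
    (h1 : ∀ x : Icc (0:ℝ) 1, (x:ℝ) ≤ 1/6 → (f x : ℝ) = -2*(x:ℝ) + 1)
    (h2 : ∀ x : Icc (0:ℝ) 1, 1/6 ≤ (x:ℝ) → (x:ℝ) ≤ 1/3 → (f x : ℝ) = 2*(x:ℝ) + 1/3)
    (h4 : ∀ x : Icc (0:ℝ) 1, 2/3 ≤ (x:ℝ) → (f x : ℝ) = (x:ℝ) - 2/3) :
    MapsTo f (Subtype.val ⁻¹' (Iic (1/3) ∪ Ici (2/3)))
      (Subtype.val ⁻¹' (Iic (1/3) ∪ Ici (2/3))) := by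
  rintro x (hx | hx)
  · right
    rcases le_or_gt (x:ℝ) (1/6) with hx' | hx'
    · have := h1 x hx'
      simp only [mem_Ici]
      linarith [x.2.2]
    · have := h2 x hx'.le hx
      simp only [mem_Ici]
      linarith
  · left
    have := h4 x hx
    simp only [mem_Iic]
    linarith [x.2.2]

theorem example31_not_transitive_general
    (f : Set.Icc (0:ℝ) 1 → Set.Icc (0:ℝ) 1)
    (h1 : ∀ x : Set.Icc (0:ℝ) 1, (x:ℝ) ≤ 1/6 → (f x : ℝ) = -2*(x:ℝ) + 1)
    (h2 : ∀ x : Set.Icc (0:ℝ) 1, 1/6 ≤ (x:ℝ) → (x:ℝ) ≤ 1/3 → (f x : ℝ) = 2*(x:ℝ) + 1/3)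
    (h4 : ∀ x : Set.Icc (0:ℝ) 1, 2/3 ≤ (x:ℝ) → (f x : ℝ) = (x:ℝ) - 2/3) :
    ¬ TopTransitive f := by
  refine not_topTransitive_of_mapsTo (mapsTo_outer_thirds f h1 h2 h4)
    (U := Subtype.val ⁻¹' Iio (1/3)) (V := Subtype.val ⁻¹' Ioo (1/3) (2/3))
    (isOpen_Iio.preimage continuous_subtype_val) (isOpen_Ioo.preimage continuous_subtype_val)
    ⟨⟨0, by norm_num⟩, by norm_num⟩ ⟨⟨1/2, by norm_num⟩, by norm_num⟩ ?_ ?_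
  · exact fun x hx => Or.inl (mem_Iic.2 (mem_Iio.1 hx).le)
  · exact disjoint_left.2 fun x hxV hxA =>
      hxA.elim (fun h => not_lt.2 h hxV.1) (fun h => not_lt.2 h hxV.2)

theorem example31_not_transitive
    (f : Set.Icc (0:ℝ) 1 → Set.Icc (0:ℝ) 1) (hf : Continuous f)
    (h1 : ∀ x : Set.Icc (0:ℝ) 1, (x:ℝ) ≤ 1/6 → (f x : ℝ) = -2*(x:ℝ) + 1)
    (h2 : ∀ x : Set.Icc (0:ℝ) 1, 1/6 ≤ (x:ℝ) → (x:ℝ) ≤ 1/3 → (f x : ℝ) = 2*(x:ℝ) + 1/3)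
    (h3 : ∀ x : Set.Icc (0:ℝ) 1, 1/3 ≤ (x:ℝ) → (x:ℝ) ≤ 2/3 → (f x : ℝ) = -3*(x:ℝ) + 2)
    (h4 : ∀ x : Set.Icc (0:ℝ) 1, 2/3 ≤ (x:ℝ) → (f x : ℝ) = (x:ℝ) - 2/3) :
    ¬ TopTransitive f :=
  example31_not_transitive_general f h1 h2 h4
end

section
/- Let f : [0,1] → [0,1] be the continuous piecewise-linear map defined by f(x) = -2x + 1 for x ∈ [0, 1/6], f(x) = 2x + 1/3 for x ∈ [1/6, 1/3], f(x) = -3x + 2 for x ∈ [1/3, 2/3], and f(x) = x - 2/3 for x ∈ [2/3, 1]. Then for every x ∈ (1/3, 4/9) and every n ≥ 1, f^n(x) ∉ (1/3, 2/3). -/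
/-! `f` maps `[0, 1/3]` into `[2/3, 1]` and `[2/3, 1]` into `[0, 1/3]`, so the complement of the
middle third is forward invariant; and `f` sends `(1/3, 4/9)` into `[2/3, 1]`. -/

open Set

def outsideMiddleThird : Set (Icc (0:ℝ) 1) := {y | (y:ℝ) ≤ 1/3} ∪ {y | 2/3 ≤ (y:ℝ)}

lemma not_mem_Ioo_of_mem_outsideMiddleThird {y : Icc (0:ℝ) 1} (hy : y ∈ outsideMiddleThird) :
    (y:ℝ) ∉ Ioo (1/3 : ℝ) (2/3) := by
  rintro ⟨hlow, hhigh⟩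
  rcases hy with (hy : (y:ℝ) ≤ 1/3) | (hy : 2/3 ≤ (y:ℝ)) <;> linarith

section

variable {f : Icc (0:ℝ) 1 → Icc (0:ℝ) 1}

lemma mapsTo_le_one_third
    (h1 : ∀ x : Icc (0:ℝ) 1, (x:ℝ) ≤ 1/6 → (f x : ℝ) = -2*(x:ℝ) + 1)
    (h2 : ∀ x : Icc (0:ℝ) 1, 1/6 ≤ (x:ℝ) → (x:ℝ) ≤ 1/3 → (f x : ℝ) = 2*(x:ℝ) + 1/3) :
    MapsTo f {y | (y:ℝ) ≤ 1/3} {y | 2/3 ≤ (y:ℝ)} := by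
  intro y (hy : (y:ℝ) ≤ 1/3)
  show 2/3 ≤ (f y : ℝ)
  rcases le_or_gt (y:ℝ) (1/6) with hle | hgt
  · rw [h1 y hle]; linarith [y.2.2]
  · rw [h2 y hgt.le hy]; linarith

lemma mapsTo_two_thirds_le
    (h4 : ∀ x : Icc (0:ℝ) 1, 2/3 ≤ (x:ℝ) → (f x : ℝ) = (x:ℝ) - 2/3) :
    MapsTo f {y | 2/3 ≤ (y:ℝ)} {y | (y:ℝ) ≤ 1/3} := by
  intro y (hy : 2/3 ≤ (y:ℝ))
  show (f y : ℝ) ≤ 1/3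
  rw [h4 y hy]; linarith [y.2.2]

lemma mapsTo_outsideMiddleThird
    (h1 : ∀ x : Icc (0:ℝ) 1, (x:ℝ) ≤ 1/6 → (f x : ℝ) = -2*(x:ℝ) + 1)
    (h2 : ∀ x : Icc (0:ℝ) 1, 1/6 ≤ (x:ℝ) → (x:ℝ) ≤ 1/3 → (f x : ℝ) = 2*(x:ℝ) + 1/3)
    (h4 : ∀ x : Icc (0:ℝ) 1, 2/3 ≤ (x:ℝ) → (f x : ℝ) = (x:ℝ) - 2/3) :
    MapsTo f outsideMiddleThird outsideMiddleThird := by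
  rintro y (hy | hy)
  · exact Or.inr (mapsTo_le_one_third h1 h2 hy)
  · exact Or.inl (mapsTo_two_thirds_le h4 hy)

lemma apply_mem_outsideMiddleThird
    (h3 : ∀ x : Icc (0:ℝ) 1, 1/3 ≤ (x:ℝ) → (x:ℝ) ≤ 2/3 → (f x : ℝ) = -3*(x:ℝ) + 2)
    {x : Icc (0:ℝ) 1} (hx : (x:ℝ) ∈ Ioo (1/3 : ℝ) (4/9)) :
    f x ∈ outsideMiddleThird := by
  right
  show 2/3 ≤ (f x : ℝ)
  rw [h3 x hx.1.le (by linarith [hx.2])]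
  linarith [hx.2]

end

theorem example31_orbit_escapes_middle_third_general
    (f : Set.Icc (0:ℝ) 1 → Set.Icc (0:ℝ) 1)
    (h1 : ∀ x : Set.Icc (0:ℝ) 1, (x:ℝ) ≤ 1/6 → (f x : ℝ) = -2*(x:ℝ) + 1)
    (h2 : ∀ x : Set.Icc (0:ℝ) 1, 1/6 ≤ (x:ℝ) → (x:ℝ) ≤ 1/3 → (f x : ℝ) = 2*(x:ℝ) + 1/3)
    (h3 : ∀ x : Set.Icc (0:ℝ) 1, 1/3 ≤ (x:ℝ) → (x:ℝ) ≤ 2/3 → (f x : ℝ) = -3*(x:ℝ) + 2)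
    (h4 : ∀ x : Set.Icc (0:ℝ) 1, 2/3 ≤ (x:ℝ) → (f x : ℝ) = (x:ℝ) - 2/3) :
    ∀ x : Set.Icc (0:ℝ) 1, (x:ℝ) ∈ Set.Ioo (1/3 : ℝ) (4/9) →
      ∀ n : ℕ, 1 ≤ n → (f^[n] x : ℝ) ∉ Set.Ioo (1/3 : ℝ) (2/3) := by
  intro x hx n hn
  obtain ⟨m, rfl⟩ : ∃ m, n = m + 1 := ⟨n - 1, by omega⟩
  rw [Function.iterate_succ_apply]
  exact not_mem_Ioo_of_mem_outsideMiddleThird <|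
    (mapsTo_outsideMiddleThird h1 h2 h4).iterate m (apply_mem_outsideMiddleThird h3 hx)

theorem example31_orbit_escapes_middle_third
    (f : Set.Icc (0:ℝ) 1 → Set.Icc (0:ℝ) 1) (hf : Continuous f)
    (h1 : ∀ x : Set.Icc (0:ℝ) 1, (x:ℝ) ≤ 1/6 → (f x : ℝ) = -2*(x:ℝ) + 1)
    (h2 : ∀ x : Set.Icc (0:ℝ) 1, 1/6 ≤ (x:ℝ) → (x:ℝ) ≤ 1/3 → (f x : ℝ) = 2*(x:ℝ) + 1/3)
    (h3 : ∀ x : Set.Icc (0:ℝ) 1, 1/3 ≤ (x:ℝ) → (x:ℝ) ≤ 2/3 → (f x : ℝ) = -3*(x:ℝ) + 2)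
    (h4 : ∀ x : Set.Icc (0:ℝ) 1, 2/3 ≤ (x:ℝ) → (f x : ℝ) = (x:ℝ) - 2/3) :
    ∀ x : Set.Icc (0:ℝ) 1, (x:ℝ) ∈ Set.Ioo (1/3 : ℝ) (4/9) →
      ∀ n : ℕ, 1 ≤ n → (f^[n] x : ℝ) ∉ Set.Ioo (1/3 : ℝ) (2/3) :=
  example31_orbit_escapes_middle_third_general f h1 h2 h3 h4
end

section
/- Let g : [0, 1/3] → [0, 1/3] be the tent-type map g(x) = |2x - 1/3|. Then g is topologically mixing: for any two nonempty open subsets U, V of [0, 1/3] there exists N ≥ 0 such that g^n(U) ∩ V ≠ ∅ for all n ≥ N. -/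
/-!
The map `x ↦ |2x - L|` sends each dyadic interval `[k L / 2^(n+1), (k+1) L / 2^(n+1)]` affinely
onto a dyadic interval of the previous level, so by induction its `n`-th iterate maps every
dyadic interval of length `L / 2^n` onto `[0, L]`. A nonempty open subset of `[0, L]` contains
such an interval for all large `n`, so its `n`-th image is eventually all of `[0, L]`.
-/

/-- A self-map of a topological space is topologically mixing if for any two nonempty
open sets `U, V` all sufficiently large iterate images of `U` meet `V`. -/
def TopMixing {Y : Type*} [TopologicalSpace Y] (g : Y → Y) : Prop :=
  ∀ U V : Set Y, IsOpen U → IsOpen V → U.Nonempty → V.Nonempty →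
    ∃ N : ℕ, ∀ n : ℕ, N ≤ n → (g^[n] '' U ∩ V).Nonempty

open Set Filter Topology

theorem TopMixing.of_eventually_image_eq_univ {Y : Type*} [TopologicalSpace Y] {g : Y → Y}
    (h : ∀ U : Set Y, IsOpen U → U.Nonempty → ∀ᶠ n in atTop, g^[n] '' U = univ) :
    TopMixing g := by
  intro U V hU _ hUne hVne
  obtain ⟨N, hN⟩ := eventually_atTop.mp (h U hU hUne)
  exact ⟨N, fun n hn => by rwa [hN n hn, univ_inter]⟩

def tentMap (L x : ℝ) : ℝ := |2 * x - L|

def dyadicIcc (L : ℝ) (n k : ℕ) : Set ℝ := Icc (k * (L / 2 ^ n)) ((k + 1) * (L / 2 ^ n))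

section

variable {L a b : ℝ}

theorem Icc_subset_image_tentMap_of_le_half (hb : b ≤ L / 2) :
    Icc (L - 2 * b) (L - 2 * a) ⊆ tentMap L '' Icc a b := by
  rintro y ⟨hy₁, hy₂⟩
  refine ⟨(L - y) / 2, ⟨by linarith, by linarith⟩, ?_⟩
  rw [tentMap, abs_of_nonpos (by linarith)]
  ring

theorem Icc_subset_image_tentMap_of_half_le (ha : L / 2 ≤ a) :
    Icc (2 * a - L) (2 * b - L) ⊆ tentMap L '' Icc a b := by
  rintro y ⟨hy₁, hy₂⟩
  refine ⟨(y + L) / 2, ⟨by linarith, by linarith⟩, ?_⟩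
  rw [tentMap, abs_of_nonneg (by linarith)]
  ring

theorem exists_dyadicIcc_subset_image_tentMap (hL : 0 ≤ L) {n k : ℕ} (hk : k < 2 ^ (n + 1)) :
    ∃ j < 2 ^ n, dyadicIcc L n j ⊆ tentMap L '' dyadicIcc L (n + 1) k := by
  have hw : L / 2 ^ n = 2 * (L / 2 ^ (n + 1)) := by field_simp; ring
  have hLw : L = 2 * 2 ^ n * (L / 2 ^ (n + 1)) := by field_simp; ring
  have hw₀ : 0 ≤ L / 2 ^ (n + 1) := by positivity
  have hk_Icc : dyadicIcc L (n + 1) k =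
      Icc (k * (L / 2 ^ (n + 1))) ((k + 1) * (L / 2 ^ (n + 1))) := rfl
  generalize L / 2 ^ (n + 1) = w at hw hLw hw₀ hk_Icc
  rw [hk_Icc]
  rcases lt_or_ge k (2 ^ n) with hlt | hge
  · -- on the left half the map reverses orientation: interval `k` lands on interval `2^n - 1 - k`
    obtain ⟨j, hj⟩ := Nat.exists_eq_add_of_lt hlt
    have hj' : (2 : ℝ) ^ n = k + j + 1 := by exact_mod_cast hj
    have hLj : L = 2 * (k + j + 1) * w := by rw [hLw, hj']
    refine ⟨j, by omega, ?_⟩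
    have hj_Icc : dyadicIcc L n j = Icc (L - 2 * ((k + 1) * w)) (L - 2 * (k * w)) := by
      rw [dyadicIcc, hw]
      congr 1 <;> linear_combination (-1 : ℝ) * hLj
    rw [hj_Icc]
    apply Icc_subset_image_tentMap_of_le_half
    have := mul_nonneg (Nat.cast_nonneg j) hw₀
    linarith
  · obtain ⟨j, rfl⟩ := Nat.exists_eq_add_of_le hge
    refine ⟨j, by rw [pow_succ] at hk; omega, ?_⟩
    have hj_Icc : dyadicIcc L n j =
        Icc (2 * ((2 ^ n + j : ℕ) * w) - L) (2 * (((2 ^ n + j : ℕ) + 1) * w) - L) := by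
      rw [dyadicIcc, hw]
      congr 1 <;> push_cast <;> linear_combination hLw
    rw [hj_Icc]
    apply Icc_subset_image_tentMap_of_half_le
    have := mul_nonneg (Nat.cast_nonneg j) hw₀
    push_cast
    linarith

theorem Icc_subset_image_iterate_tentMap (hL : 0 ≤ L) {n k : ℕ} (hk : k < 2 ^ n) :
    Icc 0 L ⊆ (tentMap L)^[n] '' dyadicIcc L n k := by
  induction n generalizing k with
  | zero =>
    obtain rfl : k = 0 := by simpa using hk
    simp [dyadicIcc]
  | succ n ih =>
    obtain ⟨j, hj, hsub⟩ := exists_dyadicIcc_subset_image_tentMap hL hk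
    calc Icc 0 L ⊆ (tentMap L)^[n] '' dyadicIcc L n j := ih hj
      _ ⊆ (tentMap L)^[n] '' (tentMap L '' dyadicIcc L (n + 1) k) := image_mono hsub
      _ = (tentMap L)^[n + 1] '' dyadicIcc L (n + 1) k := by
        rw [Function.iterate_succ, image_comp]

theorem eventually_exists_dyadicIcc_subset {c d : ℝ} (hc : 0 ≤ c) (hcd : c < d) (hd : d ≤ L) :
    ∀ᶠ n in atTop, ∃ k < 2 ^ n, dyadicIcc L n k ⊆ Icc c d := by
  have hwidth : Tendsto (fun n : ℕ => L / 2 ^ n) atTop (𝓝 0) :=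
    tendsto_const_nhds.div_atTop (tendsto_pow_atTop_atTop_of_one_lt one_lt_two)
  filter_upwards [hwidth.eventually (gt_mem_nhds (half_pos (sub_pos.mpr hcd)))] with n hn
  have hL : 0 < L := by linarith
  have hw : 0 < L / 2 ^ n := by positivity
  have hLw : L = 2 ^ n * (L / 2 ^ n) := by field_simp
  simp only [dyadicIcc]
  generalize L / 2 ^ n = w at hn hw hLw ⊢
  set k := ⌈c / w⌉₊
  have hk_ge : c ≤ k * w := (div_le_iff₀ hw).mp (Nat.le_ceil _)
  have hk_lt : k * w < c + w := by
    have := mul_lt_mul_of_pos_right (Nat.ceil_lt_add_one (div_nonneg hc hw.le)) hw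
    rwa [add_mul, div_mul_cancel₀ c hw.ne', one_mul] at this
  refine ⟨k, ?_, Icc_subset_Icc hk_ge (by linarith)⟩
  have : ((k + 1 : ℕ) : ℝ) * w < (2 ^ n : ℕ) * w := by push_cast; linarith
  have : k + 1 < 2 ^ n := by exact_mod_cast lt_of_mul_lt_mul_right this hw.le
  omega

theorem exists_Icc_subset_image_val_of_isOpen (hL : 0 < L) {U : Set (Icc 0 L)} (hU : IsOpen U)
    (hne : U.Nonempty) : ∃ c d, 0 ≤ c ∧ c < d ∧ d ≤ L ∧ Icc c d ⊆ Subtype.val '' U := by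
  obtain ⟨p, hp⟩ := hne
  obtain ⟨ε, hε, hball⟩ := Metric.isOpen_iff.mp hU p hp
  have hp₀ : (0 : ℝ) ≤ p := p.2.1
  have hpL : (p : ℝ) ≤ L := p.2.2
  refine ⟨max (p - ε / 2) 0, min (p + ε / 2) L, le_max_right _ _,
    max_lt (lt_min (by linarith) (by linarith)) (lt_min (by linarith) hL), min_le_right _ _, ?_⟩
  rintro x ⟨hx₁, hx₂⟩
  have hx : x ∈ Icc 0 L := ⟨(le_max_right _ _).trans hx₁, hx₂.trans (min_le_right _ _)⟩
  refine ⟨⟨x, hx⟩, hball ?_, rfl⟩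
  rw [Metric.mem_ball, Subtype.dist_eq, Real.dist_eq, abs_lt]
  constructor <;> linarith [le_max_left (p - ε / 2) 0, min_le_left (p + ε / 2) L]

theorem eventually_image_iterate_eq_univ (hL : 0 < L) {g : Icc 0 L → Icc 0 L}
    (hg : Function.Semiconj Subtype.val g (tentMap L)) {U : Set (Icc 0 L)} (hU : IsOpen U)
    (hne : U.Nonempty) : ∀ᶠ n in atTop, g^[n] '' U = univ := by
  obtain ⟨c, d, hc, hcd, hd, hcdU⟩ := exists_Icc_subset_image_val_of_isOpen hL hU hne
  filter_upwards [eventually_exists_dyadicIcc_subset hc hcd hd] with n ⟨k, hk, hsub⟩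
  refine eq_univ_of_forall fun x => ?_
  have hx : (x : ℝ) ∈ Subtype.val '' (g^[n] '' U) := by
    rw [(hg.iterate_right n).set_image U]
    exact image_mono (hsub.trans hcdU) (Icc_subset_image_iterate_tentMap hL.le hk x.2)
  obtain ⟨y, hy, hyx⟩ := hx
  rwa [← Subtype.ext hyx]

end

theorem tent_type_map_topMixing
    (g : Set.Icc (0:ℝ) (1/3) → Set.Icc (0:ℝ) (1/3))
    (hg : ∀ x : Set.Icc (0:ℝ) (1/3), (g x : ℝ) = |2*(x:ℝ) - 1/3|) :
    TopMixing g :=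
  TopMixing.of_eventually_image_eq_univ fun _ hU hne =>
    eventually_image_iterate_eq_univ (by norm_num) hg hU hne
end

section
/- There exists a continuous map f : [0,1] → [0,1] such that f is indecomposable, f is not strongly indecomposable, and the set of periodic points of f is exactly {0, 1}. In particular, for interval maps, indecomposability implies neither strong indecomposability nor density of periodic points. -/
open Set Metric Filter Topology Function

theorem Function.IsPeriodicPt.isFixedPt_of_id_le {α : Type*} [PartialOrder α] {g : α → α}
    {k : ℕ} {x : α} (hx : IsPeriodicPt g k x) (hk : 0 < k) (hg : id ≤ g) : IsFixedPt g x := by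
  obtain ⟨m, rfl⟩ : ∃ m, k = m + 1 := ⟨k - 1, by omega⟩
  refine le_antisymm ?_ (hg x)
  calc g x ≤ g^[m] (g x) := id_le_iterate_of_id_le hg m (g x)
    _ = x := by rw [← iterate_succ_apply]; exact hx

theorem countable_iterate_preimage_singleton {α : Type*} {g : α → α}
    (hg : ∀ y, (g ⁻¹' {y}).Countable) (n : ℕ) (y : α) : (g^[n] ⁻¹' {y}).Countable := by
  induction n with
  | zero => simp
  | succ n ih =>
    rw [iterate_succ, preimage_comp, ← biUnion_preimage_singleton]
    exact ih.biUnion fun z _ => hg z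

theorem Indecomposable.of_forall_mem_nhds {Y : Type*} [TopologicalSpace Y] {g : Y → Y} (p : Y)
    (h : ∀ A : Set Y, IsClosed A → g '' A ⊆ A → (interior A).Nonempty → A ∈ 𝓝 p) :
    Indecomposable g := fun A B hA hB hgA hgB hAi hBi =>
  ⟨p, mem_interior_iff_mem_nhds.2 (inter_mem (h A hA hgA hAi) (h B hB hgB hBi))⟩

theorem exists_Icc_subset_image_val_of_interior_nonempty {a b : ℝ} (hab : a < b)
    {A : Set (Icc a b)} (hA : (interior A).Nonempty) :
    ∃ u v, a ≤ u ∧ u < v ∧ v ≤ b ∧ Icc u v ⊆ Subtype.val '' A := by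
  obtain ⟨x, hx⟩ := hA
  obtain ⟨U, hU, hUA⟩ := isOpen_induced_iff.1 (isOpen_interior (s := A))
  have hxU : x.1 ∈ U := by rw [← hUA] at hx; exact hx
  have hne : (U ∩ Ioo a b).Nonempty :=
    mem_closure_iff.1 ((closure_Ioo hab.ne).symm ▸ x.2) U hU hxU
  obtain ⟨c, d, hcd, hsub⟩ := (hU.inter isOpen_Ioo).exists_Ioo_subset hne
  obtain ⟨u, hcu, huv⟩ := exists_between hcd
  obtain ⟨v, huv, hvd⟩ := exists_between huv
  have hIcc : Icc u v ⊆ U ∩ Ioo a b := fun y hy => hsub ⟨hcu.trans_le hy.1, hy.2.trans_lt hvd⟩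
  refine ⟨u, v, (hIcc ⟨le_rfl, huv.le⟩).2.1.le, huv, (hIcc ⟨huv.le, le_rfl⟩).2.2.le,
    fun y hy => ⟨⟨y, Ioo_subset_Icc_self (hIcc hy).2⟩, interior_subset ?_, rfl⟩⟩
  rw [← hUA]
  exact (hIcc hy).1

theorem countable_infDist_preimage_singleton {S : Set ℝ} (hS : S.Countable) (hSc : IsClosed S)
    (hne : S.Nonempty) (r : ℝ) : ((infDist · S) ⁻¹' {r}).Countable := by
  refine (hS.biUnion fun s _ => (countable_singleton (s + r)).insert (s - r)).mono fun x hx => ?_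
  obtain ⟨s, hs, hxs⟩ := hSc.exists_infDist_eq_dist hne x
  rw [mem_preimage, mem_singleton_iff, hxs, Real.dist_eq] at hx
  refine mem_biUnion hs ?_
  rcases (abs_eq (hx ▸ abs_nonneg _)).1 hx with h | h
  · exact Or.inr (by rw [mem_singleton_iff]; linarith)
  · exact Or.inl (by linarith)

theorem infDist_eq_min_of_gap {S : Set ℝ} {a b x : ℝ} (ha : a ∈ S) (hb : b ∈ S) (hax : a ≤ x)
    (hxb : x ≤ b) (hS : ∀ s ∈ S, s ≤ a ∨ b ≤ s) : infDist x S = min (x - a) (b - x) := by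
  refine le_antisymm (le_min ?_ ?_) ((le_infDist ⟨a, ha⟩).2 fun s hs => ?_)
  · simpa [Real.dist_eq, abs_of_nonneg (sub_nonneg.2 hax)] using infDist_le_dist_of_mem ha (x := x)
  · simpa [Real.dist_eq, abs_of_nonpos (sub_nonpos.2 hxb)] using infDist_le_dist_of_mem hb (x := x)
  · rw [Real.dist_eq]
    rcases hS s hs with h | h
    · exact (min_le_left _ _).trans (by linarith [le_abs_self (x - s)])
    · exact (min_le_right _ _).trans (by linarith [neg_abs_le (x - s)])

theorem infDist_eq_sub_of_forall_le {S : Set ℝ} {b x : ℝ} (hb : b ∈ S) (hxb : x ≤ b)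
    (hS : ∀ s ∈ S, b ≤ s) : infDist x S = b - x := by
  refine le_antisymm ?_ ((le_infDist ⟨b, hb⟩).2 fun s hs => ?_)
  · simpa [Real.dist_eq, abs_of_nonpos (sub_nonpos.2 hxb)] using infDist_le_dist_of_mem hb (x := x)
  · rw [Real.dist_eq]
    linarith [neg_abs_le (x - s), hS s hs]

theorem abs_abs_sub_sub_abs_sub {p u v : ℝ} (huv : u ≤ v) (hp : p ∉ Ioo u v) :
    |(|v - p| - |u - p|)| = v - u := by
  rcases le_or_gt p u with h | h
  · rw [abs_of_nonneg (by linarith : 0 ≤ v - p), abs_of_nonneg (by linarith : 0 ≤ u - p)]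
    rw [abs_of_nonneg (by linarith)]; ring
  · have hvp : v ≤ p := not_lt.1 fun hv => hp ⟨h, hv⟩
    rw [abs_of_nonpos (by linarith : v - p ≤ 0), abs_of_nonpos (by linarith : u - p ≤ 0)]
    rw [abs_of_nonpos (by linarith)]; ring

namespace TentCascade

noncomputable def peak (k : ℕ) : ℝ := 1 - (1 / 2) ^ (k + 1)

noncomputable def peaks : Set ℝ := insert 1 (range peak)

noncomputable def valley (k : ℕ) : ℝ := (peak k + peak (k + 1)) / 2

noncomputable def cascade (x : ℝ) : ℝ := 1 - 2 * infDist x peaks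

theorem peak_lt_one (k : ℕ) : peak k < 1 := by
  have : (0 : ℝ) < (1 / 2) ^ (k + 1) := by positivity
  rw [peak]; linarith

theorem peak_strictMono : StrictMono peak := fun i j hij => by
  have : (1 / 2 : ℝ) ^ (j + 1) < (1 / 2) ^ (i + 1) :=
    pow_lt_pow_right_of_lt_one₀ (by norm_num) (by norm_num) (by omega)
  simp only [peak]; linarith

theorem peak_zero : peak 0 = 1 / 2 := by norm_num [peak]

theorem half_le_peak (k : ℕ) : 1 / 2 ≤ peak k :=
  peak_zero ▸ peak_strictMono.monotone (Nat.zero_le k)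

theorem two_mul_peak_succ_sub_peak (k : ℕ) : 2 * peak (k + 1) - peak k = 1 := by
  simp only [peak]; ring

theorem tendsto_peak : Tendsto peak atTop (𝓝 1) := by
  have h := ((tendsto_pow_atTop_nhds_zero_of_lt_one (by norm_num : (0 : ℝ) ≤ 1 / 2)
    (by norm_num)).comp (tendsto_add_atTop_nat 1)).const_sub 1
  rw [sub_zero] at h
  exact h

theorem exists_lt_peak {x : ℝ} (hx : x < 1) : ∃ k, x < peak k :=
  ((tendsto_order.1 tendsto_peak).1 x hx).exists

theorem exists_peak_le_lt_peak_succ {x : ℝ} (h : 1 / 2 ≤ x) (hx : x < 1) :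
    ∃ k, peak k ≤ x ∧ x < peak (k + 1) := by
  classical
  have hex := exists_lt_peak hx
  obtain ⟨k, hk⟩ : ∃ k, Nat.find hex = k + 1 :=
    Nat.exists_eq_succ_of_ne_zero fun h0 => by
      have := Nat.find_spec hex
      rw [h0, peak_zero] at this
      linarith
  exact ⟨k, not_lt.1 (Nat.find_min hex (by omega)), hk ▸ Nat.find_spec hex⟩

theorem one_mem_peaks : (1 : ℝ) ∈ peaks := mem_insert _ _

theorem peak_mem_peaks (k : ℕ) : peak k ∈ peaks := mem_insert_of_mem _ (mem_range_self k)

theorem half_le_of_mem_peaks {s : ℝ} (hs : s ∈ peaks) : 1 / 2 ≤ s := by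
  rcases hs with rfl | ⟨j, rfl⟩
  · norm_num
  · exact half_le_peak j

theorem le_peak_or_peak_succ_le_of_mem_peaks {s : ℝ} (hs : s ∈ peaks) (k : ℕ) :
    s ≤ peak k ∨ peak (k + 1) ≤ s := by
  rcases hs with rfl | ⟨j, rfl⟩
  · exact Or.inr (peak_lt_one _).le
  · rcases le_or_gt j k with h | h
    · exact Or.inl (peak_strictMono.monotone h)
    · exact Or.inr (peak_strictMono.monotone h)

theorem isClosed_peaks : IsClosed peaks := tendsto_peak.isCompact_insert_range.isClosed

theorem countable_peaks : peaks.Countable := (countable_range peak).insert 1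

theorem peak_le_valley (k : ℕ) : peak k ≤ valley k := by
  have := peak_strictMono (Nat.lt_succ_self k)
  rw [valley]; linarith

theorem valley_le_peak_succ (k : ℕ) : valley k ≤ peak (k + 1) := by
  have := peak_strictMono (Nat.lt_succ_self k)
  rw [valley]; linarith

theorem continuous_cascade : Continuous cascade :=
  continuous_const.sub (continuous_const.mul (continuous_infDist_pt peaks))

theorem cascade_le_one (x : ℝ) : cascade x ≤ 1 := by
  have : 0 ≤ infDist x peaks := infDist_nonneg
  rw [cascade]; linarith

theorem cascade_of_mem_peaks {x : ℝ} (hx : x ∈ peaks) : cascade x = 1 := by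
  rw [cascade, infDist_zero_of_mem hx]; ring

theorem cascade_one : cascade 1 = 1 := cascade_of_mem_peaks one_mem_peaks

theorem cascade_of_le_half {x : ℝ} (hx : x ≤ 1 / 2) : cascade x = 2 * x := by
  rw [cascade, infDist_eq_sub_of_forall_le (peak_zero ▸ peak_mem_peaks 0) hx
    fun s hs => half_le_of_mem_peaks hs]
  ring

theorem cascade_zero : cascade 0 = 0 := by rw [cascade_of_le_half (by norm_num)]; ring

theorem cascade_of_mem_Icc {k : ℕ} {x : ℝ} (h₁ : peak k ≤ x) (h₂ : x ≤ peak (k + 1)) :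
    cascade x = peak (k + 1) + 2 * |x - valley k| := by
  rw [cascade, infDist_eq_min_of_gap (peak_mem_peaks k) (peak_mem_peaks (k + 1)) h₁ h₂
    fun s hs => le_peak_or_peak_succ_le_of_mem_peaks hs k]
  have := two_mul_peak_succ_sub_peak k
  rcases le_total x (valley k) with h | h <;> unfold valley at h ⊢
  · rw [abs_of_nonpos (by linarith), min_eq_left (by linarith)]; linarith
  · rw [abs_of_nonneg (by linarith), min_eq_right (by linarith)]; linarith

theorem cascade_valley (k : ℕ) : cascade (valley k) = peak (k + 1) := by
  rw [cascade_of_mem_Icc (peak_le_valley k) (valley_le_peak_succ k)]; simp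

theorem lt_cascade {x : ℝ} (h₀ : 0 < x) (h₁ : x < 1) : x < cascade x := by
  rcases le_or_gt x (1 / 2) with h | h
  · rw [cascade_of_le_half h]; linarith
  · obtain ⟨k, hk, hk'⟩ := exists_peak_le_lt_peak_succ h.le h₁
    rw [cascade_of_mem_Icc hk hk'.le]
    linarith [abs_nonneg (x - valley k)]

theorem le_cascade {x : ℝ} (h₀ : 0 ≤ x) (h₁ : x ≤ 1) : x ≤ cascade x := by
  rcases h₀.eq_or_lt with rfl | h₀
  · rw [cascade_zero]
  rcases h₁.eq_or_lt with rfl | h₁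
  · rw [cascade_one]
  exact (lt_cascade h₀ h₁).le

theorem mapsTo_cascade : MapsTo cascade (Icc 0 1) (Icc 0 1) := fun _ hx =>
  ⟨hx.1.trans (le_cascade hx.1 hx.2), cascade_le_one _⟩

theorem abs_cascade_sub_cascade {u v : ℝ} (huv : u ≤ v) (h₁ : v ≤ 1)
    (hS : ∀ x ∈ Icc u v, x ∉ peaks) (hV : ∀ k, valley k ∉ Ioo u v) :
    |cascade v - cascade u| = 2 * (v - u) := by
  have hv1 : v < 1 := h₁.lt_of_ne fun h => hS v ⟨huv, le_rfl⟩ (h ▸ one_mem_peaks)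
  rcases lt_or_ge v (1 / 2) with hv | hv
  · rw [cascade_of_le_half hv.le, cascade_of_le_half (by linarith), abs_of_nonneg (by linarith)]
    ring
  have hu : 1 / 2 < u := not_le.1 fun hu => hS (1 / 2) ⟨hu, hv⟩ (peak_zero ▸ peak_mem_peaks 0)
  obtain ⟨k, hk, hk'⟩ := exists_peak_le_lt_peak_succ hu.le (huv.trans_lt hv1)
  have hvk : v < peak (k + 1) :=
    not_le.1 fun h => hS _ ⟨hk'.le, h⟩ (peak_mem_peaks _)
  rw [cascade_of_mem_Icc (hk.trans huv) hvk.le, cascade_of_mem_Icc hk hk'.le,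
    add_sub_add_left_eq_sub, ← mul_sub, abs_mul, abs_two, abs_abs_sub_sub_abs_sub huv (hV k)]

theorem exists_one_mem_image_iterate (c : ℕ) :
    ∀ u v : ℝ, 0 ≤ u → v ≤ 1 → (1 / 2 : ℝ) ^ c < v - u → ∃ n, (1 : ℝ) ∈ cascade^[n] '' Icc u v := by
  induction c with
  | zero =>
    intro u v h₀ h₁ hlen
    norm_num at hlen
    linarith
  | succ c ih =>
    intro u v h₀ h₁ hlen
    have huv : u ≤ v := by linarith [pow_pos (by norm_num : (0 : ℝ) < 1 / 2) (c + 1)]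
    by_cases hS : ∃ x ∈ Icc u v, x ∈ peaks
    · obtain ⟨x, hx, hxS⟩ := hS
      exact ⟨1, x, hx, cascade_of_mem_peaks hxS⟩
    by_cases hV : ∃ k, valley k ∈ Ioo u v
    · obtain ⟨k, hk⟩ := hV
      refine ⟨2, valley k, Ioo_subset_Icc_self hk, ?_⟩
      simp [cascade_valley, cascade_of_mem_peaks (peak_mem_peaks _)]
    push Not at hS hV
    have hu := mapsTo_cascade ⟨h₀, huv.trans h₁⟩
    have hv := mapsTo_cascade ⟨h₀.trans huv, h₁⟩
    have hsub : uIcc (cascade u) (cascade v) ⊆ cascade '' Icc u v := by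
      have := intermediate_value_uIcc (a := u) (b := v) continuous_cascade.continuousOn
      rwa [uIcc_of_le huv] at this
    obtain ⟨n, hn⟩ := ih _ _ (le_min hu.1 hv.1) (max_le hu.2 hv.2) (by
      rw [max_sub_min_eq_abs, abs_cascade_sub_cascade huv h₁ hS hV]
      rw [pow_succ] at hlen
      linarith)
    exact ⟨n + 1, by rw [iterate_succ, image_comp]; exact image_mono hsub hn⟩

theorem countable_cascade_preimage_singleton (y : ℝ) : (cascade ⁻¹' {y}).Countable := by
  have : cascade ⁻¹' {y} = (infDist · peaks) ⁻¹' {(1 - y) / 2} := by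
    ext x
    simp only [mem_preimage, mem_singleton_iff, cascade]
    constructor <;> intro h <;> linarith
  rw [this]
  exact countable_infDist_preimage_singleton countable_peaks isClosed_peaks ⟨1, one_mem_peaks⟩ _

theorem exists_Icc_subset_image_iterate {u v : ℝ} (h₀ : 0 ≤ u) (huv : u < v) (h₁ : v ≤ 1) :
    ∃ n, ∃ w < 1, Icc w 1 ⊆ cascade^[n] '' Icc u v := by
  obtain ⟨c, hc⟩ := exists_pow_lt_of_lt_one (sub_pos.2 huv) (by norm_num : (1 / 2 : ℝ) < 1)
  obtain ⟨n, hn⟩ := exists_one_mem_image_iterate c u v h₀ h₁ hc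
  obtain ⟨y, hy, hy1⟩ := ((countable_iterate_preimage_singleton
    countable_cascade_preimage_singleton n 1).dense_compl ℝ).inter_open_nonempty _ isOpen_Ioo
    (nonempty_Ioo.2 huv)
  have hyIcc : y ∈ Icc u v := Ioo_subset_Icc_self hy
  refine ⟨n, _, ((mapsTo_cascade.iterate n) ⟨h₀.trans hyIcc.1, hyIcc.2.trans h₁⟩).2.lt_of_ne hy1,
    (isPreconnected_Icc.image _ (continuous_cascade.iterate n).continuousOn).Icc_subset
      ⟨y, hyIcc, rfl⟩ hn⟩

noncomputable def cascadeIcc : Icc (0 : ℝ) 1 → Icc (0 : ℝ) 1 :=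
  mapsTo_cascade.restrict _ _ _

theorem continuous_cascadeIcc : Continuous cascadeIcc :=
  continuous_cascade.restrict mapsTo_cascade

theorem id_le_cascadeIcc : id ≤ cascadeIcc := fun x => le_cascade x.2.1 x.2.2

theorem setOf_periodic_cascadeIcc :
    {x | ∃ k : ℕ, 1 ≤ k ∧ cascadeIcc^[k] x = x} = {0, 1} := by
  ext x
  constructor
  · rintro ⟨k, hk, hx⟩
    have hfix : cascade x = x :=
      congrArg Subtype.val (IsPeriodicPt.isFixedPt_of_id_le hx hk id_le_cascadeIcc)
    rcases x.2.1.eq_or_lt with h₀ | h₀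
    · exact Or.inl (Subtype.ext h₀.symm)
    rcases x.2.2.eq_or_lt with h₁ | h₁
    · exact Or.inr (Subtype.ext h₁)
    exact absurd hfix (lt_cascade h₀ h₁).ne'
  · rintro (rfl | rfl)
    · exact ⟨1, le_rfl, Subtype.ext cascade_zero⟩
    · exact ⟨1, le_rfl, Subtype.ext cascade_one⟩

theorem mem_nhds_one_of_image_subset {A : Set (Icc (0 : ℝ) 1)} (hA : cascadeIcc '' A ⊆ A)
    (hint : (interior A).Nonempty) : A ∈ 𝓝 1 := by
  obtain ⟨u, v, h₀, huv, h₁, hIcc⟩ :=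
    exists_Icc_subset_image_val_of_interior_nonempty zero_lt_one hint
  have hmaps : MapsTo cascade (Subtype.val '' A) (Subtype.val '' A) := by
    rintro _ ⟨y, hy, rfl⟩
    exact ⟨_, hA (mem_image_of_mem _ hy), rfl⟩
  obtain ⟨n, w, hw, hwsub⟩ := exists_Icc_subset_image_iterate h₀ huv h₁
  have htail : Icc w 1 ⊆ Subtype.val '' A :=
    hwsub.trans ((image_mono hIcc).trans (hmaps.iterate n).image_subset)
  refine mem_of_superset ((isOpen_Ioi.preimage continuous_subtype_val).mem_nhds hw) fun y hy => ?_
  obtain ⟨z, hz, hzy⟩ := htail ⟨le_of_lt hy, y.2.2⟩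
  exact Subtype.ext hzy ▸ hz

theorem indecomposable_cascadeIcc : Indecomposable cascadeIcc :=
  Indecomposable.of_forall_mem_nhds 1 fun _ _ hA hint => mem_nhds_one_of_image_subset hA hint

theorem not_stronglyIndecomposable_cascadeIcc : ¬ StronglyIndecomposable cascadeIcc := by
  intro h
  obtain ⟨x, hx⟩ := h (fun n => {x | peak n ≤ x})
    (fun n => isClosed_le continuous_const continuous_subtype_val)
    (fun n => by
      rintro _ ⟨y, hy, rfl⟩
      exact hy.trans (le_cascade y.2.1 y.2.2))
    (fun n => ⟨1, mem_interior_iff_mem_nhds.2 (mem_of_superset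
      ((isOpen_Ioi.preimage continuous_subtype_val).mem_nhds (peak_lt_one n))
      fun y hy => show peak n ≤ y.1 from le_of_lt hy)⟩)
  have hsub : ⋂ n, {x : Icc (0 : ℝ) 1 | peak n ≤ x} ⊆ {1} := fun y hy => by
    by_contra hne
    obtain ⟨k, hk⟩ := exists_lt_peak (y.2.2.lt_of_ne fun h => hne (Subtype.ext h))
    exact (mem_iInter.1 hy k).not_gt hk
  simpa [interior_singleton] using interior_mono hsub hx

end TentCascade

open TentCascade in
theorem exists_indecomposable_not_strongly_with_only_two_periodic_points :
    ∃ f : Set.Icc (0:ℝ) 1 → Set.Icc (0:ℝ) 1, Continuous f ∧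
      Indecomposable f ∧ ¬ StronglyIndecomposable f ∧
      {x : Set.Icc (0:ℝ) 1 | ∃ k : ℕ, 1 ≤ k ∧ f^[k] x = x} =
        {⟨0, by norm_num⟩, ⟨1, by norm_num⟩} :=
  ⟨cascadeIcc, continuous_cascadeIcc, indecomposable_cascadeIcc,
    not_stronglyIndecomposable_cascadeIcc, setOf_periodic_cascadeIcc⟩
end
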